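/- arXiv:2110.05439 — 2 statements merged into one kernel-verified Lean document; each statement's English description precedes it below -/
import Mathlib

section
/- Let (a0, a+, a−) be a solution of the reparametrized instanton ODE system whose value at some initial time s* > 0 lies in S0 := {(a0,a+,a−) ∈ ℝ³ : 0 < a+a− < a0 < 1, 0 < a0a− < a+ < 1, 0 < a0a+ < a− < 1}. Then the solution extends to all of [s*, ∞) and (a0, a+, a−)(s) → (0,0,0) as s → ∞. -/
open Set Filter
open Topology Real

/-- A solution of the reparametrized instanton ODE system:
`a0' = g0(s)(a₊a₋ − a0)`, `a₊' = g₊(s)(a0a₋ − a₊)`, `a₋' = g₋(s)(a0a₊ − a₋)`. -/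
def IsSolInstB2 (g0 gp gm a0 ap am : ℝ → ℝ) (s : Set ℝ) : Prop :=
  ∀ t ∈ s,
    HasDerivAt a0 (g0 t * (ap t * am t - a0 t)) t ∧
    HasDerivAt ap (gp t * (a0 t * am t - ap t)) t ∧
    HasDerivAt am (gm t * (a0 t * ap t - am t)) t

/-- The set `S0 = {0 < a₊a₋ < a0 < 1, 0 < a0a₋ < a₊ < 1, 0 < a0a₊ < a₋ < 1}`. -/
def SZero : Set (ℝ × ℝ × ℝ) :=
  {p | 0 < p.2.1 * p.2.2 ∧ p.2.1 * p.2.2 < p.1 ∧ p.1 < 1 ∧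
    0 < p.1 * p.2.2 ∧ p.1 * p.2.2 < p.2.1 ∧ p.2.1 < 1 ∧
    0 < p.1 * p.2.1 ∧ p.1 * p.2.1 < p.2.2 ∧ p.2.2 < 1}


lemma deriv_nonpos_of_left_min {f : ℝ → ℝ} {d s0 τ : ℝ} (h : s0 < τ)
    (hd : HasDerivWithinAt f d (Icc s0 τ) τ)
    (hmin : ∀ s ∈ Ico s0 τ, f τ ≤ f s) : d ≤ 0 := by
  rw [hasDerivWithinAt_iff_tendsto_slope, Set.Icc_sdiff_right] at hd
  have hne : (𝓝[Ico s0 τ] τ).NeBot := by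
    rw [nhdsWithin_Ico_eq_nhdsLT h]; infer_instance
  refine le_of_tendsto hd ?_
  filter_upwards [self_mem_nhdsWithin] with s hs
  have h1 : 0 ≤ f s - f τ := sub_nonneg.2 (hmin s hs)
  have h2 : s - τ < 0 := sub_neg.2 hs.2
  rw [slope_def_field]
  exact div_nonpos_of_nonneg_of_nonpos h1 h2.le

lemma deriv_nonneg_of_left_max {f : ℝ → ℝ} {d s0 τ : ℝ} (h : s0 < τ)
    (hd : HasDerivWithinAt f d (Icc s0 τ) τ)
    (hmax : ∀ s ∈ Ico s0 τ, f s ≤ f τ) : 0 ≤ d := by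
  have := deriv_nonpos_of_left_min h (hd.neg) (fun s hs => neg_le_neg (hmax s hs))
  linarith

lemma deriv_nonneg_of_right_min {f : ℝ → ℝ} {d τ σ : ℝ} (h : τ < σ)
    (hd : HasDerivWithinAt f d (Icc τ σ) τ)
    (hmin : ∀ s ∈ Ioc τ σ, f τ ≤ f s) : 0 ≤ d := by
  rw [hasDerivWithinAt_iff_tendsto_slope, Set.Icc_diff_left] at hd
  have hne : (𝓝[Ioc τ σ] τ).NeBot := by
    rw [nhdsWithin_Ioc_eq_nhdsGT h]; infer_instance
  refine ge_of_tendsto hd ?_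
  filter_upwards [self_mem_nhdsWithin] with s hs
  have h1 : 0 ≤ f s - f τ := sub_nonneg.2 (hmin s hs)
  have h2 : 0 < s - τ := sub_pos.2 hs.1
  rw [slope_def_field]
  positivity


lemma exists_bound_of_tendsto {g : ℝ → ℝ} {a C : ℝ}
    (hc : ContinuousOn g (Ici a)) (hl : Tendsto g atTop (nhds C)) :
    ∃ G, ∀ s ∈ Ici a, g s ≤ G := by
  have hev : ∀ᶠ s in atTop, g s < C + 1 := hl.eventually_lt_const (lt_add_one C)
  obtain ⟨S, hS⟩ := eventually_atTop.1 hev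
  obtain ⟨M, hM⟩ := (isCompact_Icc (a := a) (b := max a S)).exists_bound_of_continuousOn
    (hc.mono Icc_subset_Ici_self)
  refine ⟨max M (C + 1), fun s hs => ?_⟩
  rcases le_or_gt s (max a S) with h | h
  · exact le_max_of_le_left ((le_abs_self _).trans ((Real.norm_eq_abs _ ▸ hM s ⟨hs, h⟩)))
  · exact le_max_of_le_right (hS s (le_of_lt (lt_of_le_of_lt (le_max_right a S) h))).le

noncomputable abbrev vf (g0 gp gm : ℝ → ℝ) : ℝ → (ℝ × ℝ × ℝ) → (ℝ × ℝ × ℝ) := fun t p =>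
  (g0 t * (p.2.1 * p.2.2 - p.1), gp t * (p.1 * p.2.2 - p.2.1), gm t * (p.1 * p.2.1 - p.2.2))

lemma key_est {g G x y z x' y' z' : ℝ} (hg0 : 0 ≤ g) (hgG : g ≤ G)
    (hy : |y| ≤ 2) (hz' : |z'| ≤ 2) :
    |g * (y * z - x) - g * (y' * z' - x')| ≤ G * (2 * |z - z'| + 2 * |y - y'| + |x - x'|) := by
  have h0 : |g * (y * z - x) - g * (y' * z' - x')|
      = g * |(y * (z - z') + z' * (y - y')) - (x - x')| := by
    have he : g * (y * z - x) - g * (y' * z' - x')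
        = g * ((y * (z - z') + z' * (y - y')) - (x - x')) := by ring
    rw [he, abs_mul, abs_of_nonneg hg0]
  have t1 : |y * (z - z')| ≤ 2 * |z - z'| := by
    rw [abs_mul]; exact mul_le_mul_of_nonneg_right hy (abs_nonneg _)
  have t2 : |z' * (y - y')| ≤ 2 * |y - y'| := by
    rw [abs_mul]; exact mul_le_mul_of_nonneg_right hz' (abs_nonneg _)
  have h1 : |(y * (z - z') + z' * (y - y')) - (x - x')|
      ≤ 2 * |z - z'| + 2 * |y - y'| + |x - x'| := by
    calc |(y * (z - z') + z' * (y - y')) - (x - x')|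
        ≤ |y * (z - z') + z' * (y - y')| + |x - x'| := abs_sub _ _
      _ ≤ (|y * (z - z')| + |z' * (y - y')|) + |x - x'| := by
          exact add_le_add (abs_add_le _ _) le_rfl
      _ ≤ 2 * |z - z'| + 2 * |y - y'| + |x - x'| := by linarith
  rw [h0]
  exact mul_le_mul hgG h1 (abs_nonneg _) (hg0.trans hgG)

lemma vf_lipschitz {g0 gp gm : ℝ → ℝ} {G : ℝ}
    (hg00 : ∀ t, 0 ≤ g0 t) (hgp0 : ∀ t, 0 ≤ gp t) (hgm0 : ∀ t, 0 ≤ gm t)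
    (hG0 : ∀ t, g0 t ≤ G) (hGp : ∀ t, gp t ≤ G) (hGm : ∀ t, gm t ≤ G) (t : ℝ) :
    LipschitzOnWith (Real.toNNReal (5 * G)) (vf g0 gp gm t)
      (Metric.closedBall (0 : ℝ × ℝ × ℝ) 2) := by
  have hG : 0 ≤ G := (hg00 t).trans (hG0 t)
  apply LipschitzOnWith.of_dist_le_mul
  intro p hp q hq
  have hnp : ‖p‖ ≤ 2 := by simpa [dist_zero_right] using (Metric.mem_closedBall.1 hp)
  have hnq : ‖q‖ ≤ 2 := by simpa [dist_zero_right] using (Metric.mem_closedBall.1 hq)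
  have hp1 : |p.1| ≤ 2 := le_trans (norm_fst_le p) hnp
  have hp21 : |p.2.1| ≤ 2 := le_trans (le_trans (norm_fst_le p.2) (norm_snd_le p)) hnp
  have hp22 : |p.2.2| ≤ 2 := le_trans (le_trans (norm_snd_le p.2) (norm_snd_le p)) hnp
  have hq1 : |q.1| ≤ 2 := le_trans (norm_fst_le q) hnq
  have hq21 : |q.2.1| ≤ 2 := le_trans (le_trans (norm_fst_le q.2) (norm_snd_le q)) hnq
  have hq22 : |q.2.2| ≤ 2 := le_trans (le_trans (norm_snd_le q.2) (norm_snd_le q)) hnq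
  have d1 : dist p.1 q.1 ≤ dist p q := by
    rw [Prod.dist_eq]; exact le_max_left _ _
  have d2 : dist p.2 q.2 ≤ dist p q := by
    rw [Prod.dist_eq]; exact le_max_right _ _
  have d21 : dist p.2.1 q.2.1 ≤ dist p q := le_trans (by rw [Prod.dist_eq]; exact le_max_left _ _) d2
  have d22 : dist p.2.2 q.2.2 ≤ dist p q := le_trans (by rw [Prod.dist_eq]; exact le_max_right _ _) d2
  rw [Real.dist_eq] at d1 d21 d22
  have hdist : (0:ℝ) ≤ dist p q := dist_nonneg
  have c1 : |g0 t * (p.2.1 * p.2.2 - p.1) - g0 t * (q.2.1 * q.2.2 - q.1)| ≤ 5 * G * dist p q := by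
    have := key_est (hg00 t) (hG0 t) hp21 hq22 (x := p.1) (x' := q.1) (y := p.2.1) (y' := q.2.1) (z := p.2.2) (z' := q.2.2)
    nlinarith [this]
  have c2 : |gp t * (p.1 * p.2.2 - p.2.1) - gp t * (q.1 * q.2.2 - q.2.1)| ≤ 5 * G * dist p q := by
    have := key_est (hgp0 t) (hGp t) hp1 hq22 (x := p.2.1) (x' := q.2.1) (y := p.1) (y' := q.1) (z := p.2.2) (z' := q.2.2)
    nlinarith [this]
  have c3 : |gm t * (p.1 * p.2.1 - p.2.2) - gm t * (q.1 * q.2.1 - q.2.2)| ≤ 5 * G * dist p q := by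
    have := key_est (hgm0 t) (hGm t) hp1 hq21 (x := p.2.2) (x' := q.2.2) (y := p.1) (y' := q.1) (z := p.2.1) (z' := q.2.1)
    nlinarith [this]
  have hco : (Real.toNNReal (5 * G) : ℝ) = 5 * G := Real.coe_toNNReal _ (by linarith)
  rw [Prod.dist_eq, Prod.dist_eq]
  rw [hco]
  refine max_le ?_ (max_le ?_ ?_) <;> rw [Real.dist_eq]
  · exact c1
  · exact c2
  · exact c3

lemma vf_norm_le {g0 gp gm : ℝ → ℝ} {G : ℝ}
    (hg00 : ∀ t, 0 ≤ g0 t) (hgp0 : ∀ t, 0 ≤ gp t) (hgm0 : ∀ t, 0 ≤ gm t)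
    (hG0 : ∀ t, g0 t ≤ G) (hGp : ∀ t, gp t ≤ G) (hGm : ∀ t, gm t ≤ G) (t : ℝ)
    {p : ℝ × ℝ × ℝ} (hp : p ∈ Metric.closedBall (0 : ℝ × ℝ × ℝ) 2) :
    ‖vf g0 gp gm t p‖ ≤ 6 * G := by
  have hnp : ‖p‖ ≤ 2 := by simpa [dist_zero_right] using (Metric.mem_closedBall.1 hp)
  have hp1 : |p.1| ≤ 2 := le_trans (norm_fst_le p) hnp
  have hp21 : |p.2.1| ≤ 2 := le_trans (le_trans (norm_fst_le p.2) (norm_snd_le p)) hnp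
  have hp22 : |p.2.2| ≤ 2 := le_trans (le_trans (norm_snd_le p.2) (norm_snd_le p)) hnp
  have key : ∀ g x y z : ℝ, 0 ≤ g → g ≤ G → |x| ≤ 2 → |y| ≤ 2 → |z| ≤ 2 →
      |g * (y * z - x)| ≤ 6 * G := by
    intro g x y z hg hgG hx hy hz
    have h1 : |y * z - x| ≤ 6 := by
      calc |y * z - x| ≤ |y * z| + |x| := abs_sub _ _
        _ ≤ 2 * 2 + 2 := by
            rw [abs_mul]
            have := mul_le_mul hy hz (abs_nonneg _) (by norm_num : (0:ℝ) ≤ 2)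
            linarith
        _ = 6 := by norm_num
    calc |g * (y * z - x)| = g * |y * z - x| := by rw [abs_mul, abs_of_nonneg hg]
      _ ≤ G * 6 := mul_le_mul hgG h1 (abs_nonneg _) (hg.trans hgG)
      _ = 6 * G := by ring
  show max ‖_‖ (max ‖_‖ ‖_‖) ≤ 6 * G
  refine max_le ?_ (max_le ?_ ?_) <;> rw [Real.norm_eq_abs]
  · exact key _ _ _ _ (hg00 t) (hG0 t) hp1 hp21 hp22
  · exact key _ _ _ _ (hgp0 t) (hGp t) hp21 hp1 hp22
  · exact key _ _ _ _ (hgm0 t) (hGm t) hp22 hp1 hp21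

lemma local_exists {g0 gp gm : ℝ → ℝ} {G : ℝ}
    (hc0 : Continuous g0) (hcp : Continuous gp) (hcm : Continuous gm)
    (hg00 : ∀ t, 0 ≤ g0 t) (hgp0 : ∀ t, 0 ≤ gp t) (hgm0 : ∀ t, 0 ≤ gm t)
    (hG0 : ∀ t, g0 t ≤ G) (hGp : ∀ t, gp t ≤ G) (hGm : ∀ t, gm t ≤ G)
    (hG1 : 1 ≤ G) (t0 : ℝ) (x₀ : ℝ × ℝ × ℝ) (hx : ‖x₀‖ ≤ 1) :
    ∃ f : ℝ → ℝ × ℝ × ℝ, f t0 = x₀ ∧ ∀ t ∈ Icc t0 (t0 + 1 / (6 * G)),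
      HasDerivWithinAt f (vf g0 gp gm t (f t)) (Icc t0 (t0 + 1 / (6 * G))) t := by
  have hGpos : (0:ℝ) < G := lt_of_lt_of_le one_pos hG1
  have hh : (0:ℝ) < 1 / (6 * G) := by positivity
  have hsub : Metric.closedBall x₀ 1 ⊆ Metric.closedBall (0 : ℝ × ℝ × ℝ) 2 := by
    intro y hy
    rw [Metric.mem_closedBall] at hy ⊢
    calc dist y 0 ≤ dist y x₀ + dist x₀ 0 := dist_triangle _ _ _
      _ ≤ 1 + 1 := add_le_add hy (by simpa [dist_zero_right] using hx)
      _ = 2 := by norm_num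
  have hpl : IsPicardLindelof (vf g0 gp gm) (tmin := t0) (tmax := t0 + 1 / (6 * G))
      ⟨t0, left_mem_Icc.2 (by linarith)⟩ x₀ 1 0 (Real.toNNReal (6 * G)) (Real.toNNReal (5 * G)) := by
    constructor
    · intro t _
      exact (vf_lipschitz hg00 hgp0 hgm0 hG0 hGp hGm t).mono (by simpa using hsub)
    · intro x _
      apply Continuous.continuousOn
      exact ((hc0.mul continuous_const).prodMk
        ((hcp.mul continuous_const).prodMk (hcm.mul continuous_const)))
    · intro t _ x hxball
      rw [Real.coe_toNNReal _ (by linarith)]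
      exact vf_norm_le hg00 hgp0 hgm0 hG0 hGp hGm t (hsub (by simpa using hxball))
    · show ((6 * G).toNNReal : ℝ) * max (t0 + 1 / (6 * G) - t0) (t0 - t0) ≤ ((1:NNReal):ℝ) - ((0:NNReal):ℝ)
      rw [Real.coe_toNNReal _ (by linarith), NNReal.coe_one, NNReal.coe_zero, sub_zero]
      have : max (t0 + 1 / (6 * G) - t0) (t0 - t0) = 1 / (6 * G) := by
        rw [show t0 + 1 / (6 * G) - t0 = 1 / (6 * G) by ring, show t0 - t0 = 0 by ring, max_eq_left hh.le]
      rw [this]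
      rw [mul_one_div, div_self (by positivity)]
  obtain ⟨α, hα0, hαD⟩ := hpl.exists_eq_forall_mem_Icc_hasDerivWithinAt₀
  exact ⟨α, hα0, hαD⟩

lemma invariance {g0 gp gm : ℝ → ℝ} {G δ q s0 B : ℝ} {b : ℝ → ℝ × ℝ × ℝ}
    (hg0pos : ∀ t, 0 < g0 t) (hgppos : ∀ t, 0 < gp t) (hgmpos : ∀ t, 0 < gm t)
    (hG0 : ∀ t, g0 t ≤ G) (hGp : ∀ t, gp t ≤ G) (hGm : ∀ t, gm t ≤ G)
    (hδ : 0 < δ) (hq : q < 1) (hs0B : s0 ≤ B)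
    (hb : ∀ t ∈ Icc s0 B, HasDerivWithinAt b (vf g0 gp gm t (b t)) (Icc s0 B) t)
    (h1l : δ < (b s0).1) (h1u : (b s0).1 < q)
    (h2l : δ < (b s0).2.1) (h2u : (b s0).2.1 < q)
    (h3l : δ < (b s0).2.2) (h3u : (b s0).2.2 < q) :
    ∀ t ∈ Icc s0 B,
      (δ * Real.exp (-(G + 1) * (t - s0)) < (b t).1 ∧ (b t).1 < q) ∧
      (δ * Real.exp (-(G + 1) * (t - s0)) < (b t).2.1 ∧ (b t).2.1 < q) ∧
      (δ * Real.exp (-(G + 1) * (t - s0)) < (b t).2.2 ∧ (b t).2.2 < q) := by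
  set β : ℝ → ℝ := fun s => δ * Real.exp (-(G + 1) * (s - s0)) with hβ
  have hβpos : ∀ u, 0 < β u := fun u => by rw [hβ]; positivity
  have hβd : ∀ u, HasDerivAt β (-(G + 1) * β u) u := by
    intro u
    have h1 := (HasDerivAt.exp (((hasDerivAt_id u).sub_const s0).const_mul
      (-(G + 1)))).const_mul δ
    simp only [id_eq] at h1
    rw [hβ]
    exact h1.congr_deriv (by beta_reduce; ring)
  have βcont : Continuous β := by
    rw [hβ]
    exact continuous_const.mul (Real.continuous_exp.comp
      (continuous_const.mul (continuous_id.sub continuous_const)))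
  set F : ℝ → ℝ := fun s => min (min ((b s).1 - β s) (q - (b s).1))
    (min (min ((b s).2.1 - β s) (q - (b s).2.1)) (min ((b s).2.2 - β s) (q - (b s).2.2)))
    with hFdef
  have m1l : ∀ s, F s ≤ (b s).1 - β s := fun s => (min_le_left _ _).trans (min_le_left _ _)
  have m1u : ∀ s, F s ≤ q - (b s).1 := fun s => (min_le_left _ _).trans (min_le_right _ _)
  have m2l : ∀ s, F s ≤ (b s).2.1 - β s := fun s =>
    ((min_le_left _ _).trans (min_le_left _ _)).trans' (min_le_right _ _)
  have m2u : ∀ s, F s ≤ q - (b s).2.1 := fun s =>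
    ((min_le_left _ _).trans (min_le_right _ _)).trans' (min_le_right _ _)
  have m3l : ∀ s, F s ≤ (b s).2.2 - β s := fun s =>
    ((min_le_right _ _).trans (min_le_left _ _)).trans' (min_le_right _ _)
  have m3u : ∀ s, F s ≤ q - (b s).2.2 := fun s =>
    ((min_le_right _ _).trans (min_le_right _ _)).trans' (min_le_right _ _)
  suffices hF : ∀ t ∈ Icc s0 B, 0 < F t by
    intro t ht
    have h := hF t ht
    refine ⟨⟨?_, ?_⟩, ⟨?_, ?_⟩, ⟨?_, ?_⟩⟩
    · exact sub_pos.1 (h.trans_le (m1l t))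
    · exact sub_pos.1 (h.trans_le (m1u t))
    · exact sub_pos.1 (h.trans_le (m2l t))
    · exact sub_pos.1 (h.trans_le (m2u t))
    · exact sub_pos.1 (h.trans_le (m3l t))
    · exact sub_pos.1 (h.trans_le (m3u t))
  by_contra hcon
  push_neg at hcon
  obtain ⟨t₀, ht₀, hFt₀⟩ := hcon
  have bcont : ContinuousOn b (Icc s0 B) := fun t ht => (hb t ht).continuousWithinAt
  have hb1c : ContinuousOn (fun s => (b s).1) (Icc s0 B) := bcont.fst
  have hb21c : ContinuousOn (fun s => (b s).2.1) (Icc s0 B) := bcont.snd.fst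
  have hb22c : ContinuousOn (fun s => (b s).2.2) (Icc s0 B) := bcont.snd.snd
  have Fcont : ContinuousOn F (Icc s0 B) := by
    rw [hFdef]
    exact ((hb1c.sub βcont.continuousOn).inf (continuousOn_const.sub hb1c)).inf
      (((hb21c.sub βcont.continuousOn).inf (continuousOn_const.sub hb21c)).inf
        ((hb22c.sub βcont.continuousOn).inf (continuousOn_const.sub hb22c)))
  set V : Set ℝ := {s | s ∈ Icc s0 B ∧ F s ≤ 0} with hVdef
  have hVc : IsClosed V := by
    have : V = Icc s0 B ∩ F ⁻¹' Iic 0 := by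
      ext s; simp [hVdef, mem_Iic]
    rw [this]
    exact Fcont.preimage_isClosed_of_isClosed isClosed_Icc isClosed_Iic
  have hVne : V.Nonempty := ⟨t₀, ht₀, hFt₀⟩
  have hVbdd : BddBelow V := bddBelow_Icc.mono (fun s hs => hs.1)
  set τ := sInf V with hτdef
  have hτV : τ ∈ V := hVc.csInf_mem hVne hVbdd
  obtain ⟨hτIcc, hFτ⟩ := hτV
  have hβs0 : β s0 = δ := by rw [hβ]; simp
  have hFs0 : 0 < F s0 := by
    rw [hFdef]
    refine lt_min (lt_min ?_ ?_) (lt_min (lt_min ?_ ?_) (lt_min ?_ ?_)) <;>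
      rw [sub_pos] <;> first
        | (rw [hβs0]; assumption)
        | assumption
  have hs0τ : s0 < τ := by
    rcases lt_or_eq_of_le hτIcc.1 with h | h
    · exact h
    · exact absurd (h ▸ hFτ) (not_le.2 (h ▸ hFs0))
  have hbefore : ∀ s ∈ Ico s0 τ, 0 < F s := by
    intro s hs
    by_contra hle
    push_neg at hle
    have : s ∈ V := ⟨⟨hs.1, hs.2.le.trans hτIcc.2⟩, hle⟩
    exact absurd (csInf_le hVbdd this) (not_le.2 hs.2)
  have hIcoSub : Ico s0 τ ⊆ Icc s0 B := fun s hs => ⟨hs.1, hs.2.le.trans hτIcc.2⟩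
  have hneIco : (𝓝[Ico s0 τ] τ).NeBot := by
    rw [nhdsWithin_Ico_eq_nhdsLT hs0τ]; infer_instance
  have weak : ∀ φ : ℝ → ℝ, ContinuousOn φ (Icc s0 B) → (∀ s, 0 < F s → 0 < φ s) → 0 ≤ φ τ := by
    intro φ hφ himp
    have ht : Tendsto φ (𝓝[Ico s0 τ] τ) (𝓝 (φ τ)) :=
      (hφ τ hτIcc).mono_left (nhdsWithin_mono τ hIcoSub)
    refine ge_of_tendsto ht ?_
    filter_upwards [self_mem_nhdsWithin] with s hs
    exact (himp s (hbefore s hs)).le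
  have w1l : 0 ≤ (b τ).1 - β τ :=
    weak _ (hb1c.sub βcont.continuousOn) (fun s hs => hs.trans_le (m1l s))
  have w1u : 0 ≤ q - (b τ).1 :=
    weak _ (continuousOn_const.sub hb1c) (fun s hs => hs.trans_le (m1u s))
  have w2l : 0 ≤ (b τ).2.1 - β τ :=
    weak _ (hb21c.sub βcont.continuousOn) (fun s hs => hs.trans_le (m2l s))
  have w2u : 0 ≤ q - (b τ).2.1 :=
    weak _ (continuousOn_const.sub hb21c) (fun s hs => hs.trans_le (m2u s))
  have w3l : 0 ≤ (b τ).2.2 - β τ :=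
    weak _ (hb22c.sub βcont.continuousOn) (fun s hs => hs.trans_le (m3l s))
  have w3u : 0 ≤ q - (b τ).2.2 :=
    weak _ (continuousOn_const.sub hb22c) (fun s hs => hs.trans_le (m3u s))
  have hq0 : (0:ℝ) ≤ q := le_trans (hβpos τ).le (by linarith)
  -- derivatives of components at τ within Icc s0 τ
  have hder : HasDerivWithinAt b (vf g0 gp gm τ (b τ)) (Icc s0 τ) τ :=
    (hb τ hτIcc).mono (Icc_subset_Icc le_rfl hτIcc.2)
  have comp1 : HasDerivWithinAt (fun s => (b s).1)
      (g0 τ * ((b τ).2.1 * (b τ).2.2 - (b τ).1)) (Icc s0 τ) τ :=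
    (ContinuousLinearMap.fst ℝ ℝ (ℝ × ℝ)).hasFDerivAt.comp_hasDerivWithinAt τ hder
  have comp2 : HasDerivWithinAt (fun s => (b s).2.1)
      (gp τ * ((b τ).1 * (b τ).2.2 - (b τ).2.1)) (Icc s0 τ) τ :=
    (ContinuousLinearMap.fst ℝ ℝ ℝ).hasFDerivAt.comp_hasDerivWithinAt τ
      ((ContinuousLinearMap.snd ℝ ℝ (ℝ × ℝ)).hasFDerivAt.comp_hasDerivWithinAt τ hder)
  have comp3 : HasDerivWithinAt (fun s => (b s).2.2)
      (gm τ * ((b τ).1 * (b τ).2.1 - (b τ).2.2)) (Icc s0 τ) τ :=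
    (ContinuousLinearMap.snd ℝ ℝ ℝ).hasFDerivAt.comp_hasDerivWithinAt τ
      ((ContinuousLinearMap.snd ℝ ℝ (ℝ × ℝ)).hasFDerivAt.comp_hasDerivWithinAt τ hder)
  -- core contradiction lemmas
  have coreL : ∀ (x : ℝ → ℝ) (gxτ yτ zτ : ℝ),
      HasDerivWithinAt x (gxτ * (yτ * zτ - x τ)) (Icc s0 τ) τ →
      0 < gxτ → gxτ ≤ G → 0 ≤ yτ → 0 ≤ zτ → x τ = β τ →
      (∀ s ∈ Ico s0 τ, 0 < x s - β s) → False := by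
    intro x gxτ yτ zτ hdx hgx hgxG hy hz hxτ hbef
    have hf : HasDerivWithinAt (fun s => x s - β s)
        (gxτ * (yτ * zτ - x τ) - (-(G + 1) * β τ)) (Icc s0 τ) τ :=
      hdx.sub (hβd τ).hasDerivWithinAt
    have hmin : ∀ s ∈ Ico s0 τ, x τ - β τ ≤ x s - β s := by
      intro s hs
      rw [hxτ, sub_self]
      exact (hbef s hs).le
    have hle := deriv_nonpos_of_left_min hs0τ hf hmin
    have hβτ := hβpos τ
    nlinarith [mul_nonneg hy hz, mul_le_mul_of_nonneg_right hgxG hβτ.le,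
      mul_nonneg (mul_nonneg hy hz) hgx.le, mul_pos hgx hβτ]
  have coreU : ∀ (x : ℝ → ℝ) (gxτ yτ zτ : ℝ),
      HasDerivWithinAt x (gxτ * (yτ * zτ - x τ)) (Icc s0 τ) τ →
      0 < gxτ → 0 ≤ yτ → yτ ≤ q → 0 ≤ zτ → zτ ≤ q → x τ = q →
      (∀ s ∈ Ico s0 τ, 0 < q - x s) → False := by
    intro x gxτ yτ zτ hdx hgx hy hyq hz hzq hxτ hbef
    have hmax : ∀ s ∈ Ico s0 τ, x s ≤ x τ := by
      intro s hs
      have := hbef s hs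
      rw [hxτ]; linarith
    have hge := deriv_nonneg_of_left_max hs0τ hdx hmax
    have hyz : yτ * zτ ≤ q * q := mul_le_mul hyq hzq hz hq0
    nlinarith [mul_pos hgx (show (0:ℝ) < q - q * q by nlinarith)]
  -- the six cases
  have e1l := fun s hs => (hbefore s hs).trans_le (m1l s)
  have e1u := fun s hs => (hbefore s hs).trans_le (m1u s)
  have e2l := fun s hs => (hbefore s hs).trans_le (m2l s)
  have e2u := fun s hs => (hbefore s hs).trans_le (m2u s)
  have e3l := fun s hs => (hbefore s hs).trans_le (m3l s)
  have e3u := fun s hs => (hbefore s hs).trans_le (m3u s)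
  have hy2 : 0 ≤ (b τ).2.1 := le_trans (hβpos τ).le (by linarith)
  have hy3 : 0 ≤ (b τ).2.2 := le_trans (hβpos τ).le (by linarith)
  have hy1 : 0 ≤ (b τ).1 := le_trans (hβpos τ).le (by linarith)
  rcases min_le_iff.1 hFτ with h | h
  · rcases min_le_iff.1 h with h' | h'
    · exact coreL _ _ _ _ comp1 (hg0pos τ) (hG0 τ) hy2 hy3 (by linarith) e1l
    · exact coreU _ _ _ _ comp1 (hg0pos τ) hy2 (by linarith) hy3 (by linarith)
        (by linarith) e1u
  · rcases min_le_iff.1 h with h' | h'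
    · rcases min_le_iff.1 h' with h'' | h''
      · exact coreL _ _ _ _ comp2 (hgppos τ) (hGp τ) hy1 hy3 (by linarith) e2l
      · exact coreU _ _ _ _ comp2 (hgppos τ) hy1 (by linarith) hy3 (by linarith)
          (by linarith) e2u
    · rcases min_le_iff.1 h' with h'' | h''
      · exact coreL _ _ _ _ comp3 (hgmpos τ) (hGm τ) hy1 hy2 (by linarith) e3l
      · exact coreU _ _ _ _ comp3 (hgmpos τ) hy1 (by linarith) hy2 (by linarith)
          (by linarith) e3u

lemma descent_step {x y z gx : ℝ → ℝ} {c r r' S : ℝ}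
    (hc : 0 < c) (hr0 : 0 < r) (hrr' : r * r < r') (hr'r : r' ≤ r)
    (hd : ∀ s ∈ Ici S, HasDerivAt x (gx s * (y s * z s - x s)) s)
    (hgc : ∀ s ∈ Ici S, c ≤ gx s)
    (hy0 : ∀ s ∈ Ici S, 0 ≤ y s) (hyr : ∀ s ∈ Ici S, y s ≤ r)
    (hz0 : ∀ s ∈ Ici S, 0 ≤ z s) (hzr : ∀ s ∈ Ici S, z s ≤ r)
    (hxr : ∀ s ∈ Ici S, x s ≤ r) :
    ∃ S' ≥ S, ∀ s ∈ Ici S', x s ≤ r' := by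
  set κ : ℝ := c * (r' - r * r) with hκdef
  have hκ : 0 < κ := by rw [hκdef]; nlinarith
  have hr'0 : 0 < r' := lt_of_le_of_lt (mul_self_nonneg r) hrr'
  -- derivative is ≤ -κ whenever x s ≥ r'
  have hkey : ∀ s ∈ Ici S, r' ≤ x s → gx s * (y s * z s - x s) ≤ -κ := by
    intro s hs hxs
    have hyz : y s * z s ≤ r * r := mul_le_mul (hyr s hs) (hzr s hs) (hz0 s hs) hr0.le
    have hgs : c ≤ gx s := hgc s hs
    have h1 : y s * z s - x s ≤ r * r - r' := by linarith
    have h2 : gx s * (y s * z s - x s) ≤ gx s * (r * r - r') :=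
      mul_le_mul_of_nonneg_left h1 (hc.le.trans hgs)
    have h3 : gx s * (r * r - r') ≤ c * (r * r - r') := by nlinarith
    rw [hκdef]
    nlinarith
  -- (a) find s1 with x s1 ≤ r'
  set X : ℝ := S + (r + 1) / κ with hXdef
  have hq0 : (0:ℝ) ≤ (r + 1) / κ := by positivity
  have hSX : S ≤ X := by rw [hXdef]; linarith
  have hstep1 : ∃ s1 ∈ Icc S X, x s1 ≤ r' := by
    by_contra hall
    push_neg at hall
    set ψ : ℝ → ℝ := fun s => x s + κ * s with hψdef
    have hψd : ∀ s ∈ Ici S, HasDerivAt ψ (gx s * (y s * z s - x s) + κ * 1) s := by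
      intro s hs
      exact (hd s hs).add ((hasDerivAt_id s).const_mul κ)
    have hψcont : ContinuousOn ψ (Icc S X) := fun s hs =>
      (hψd s hs.1).continuousAt.continuousWithinAt
    have hant : AntitoneOn ψ (Icc S X) := by
      refine antitoneOn_of_deriv_nonpos (convex_Icc S X) hψcont ?_ ?_
      · intro s hs
        rw [interior_Icc] at hs
        exact (hψd s hs.1.le).differentiableAt.differentiableWithinAt
      intro s hs
      rw [interior_Icc] at hs
      rw [(hψd s hs.1.le).deriv]
      have := hkey s hs.1.le (hall s ⟨hs.1.le, hs.2.le⟩).le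
      linarith
    have hψle : ψ X ≤ ψ S := hant ⟨le_rfl, hSX⟩ ⟨hSX, le_rfl⟩ hSX
    have hκX : κ * (X - S) = r + 1 := by
      rw [hXdef]
      field_simp
      ring
    have hxX : x X ≤ x S - (r + 1) := by
      rw [hψdef] at hψle
      simp only [] at hψle
      nlinarith
    have h1 := hxr S self_mem_Ici
    have h2 := hall X ⟨hSX, le_rfl⟩
    linarith
  obtain ⟨s1, hs1mem, hs1⟩ := hstep1
  refine ⟨s1, hs1mem.1, ?_⟩
  intro σ hσ
  by_contra hσ'
  push_neg at hσ'
  have hs1σ : s1 < σ := by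
    rcases lt_or_eq_of_le (mem_Ici.1 hσ) with h | h
    · exact h
    · rw [← h] at hσ'; linarith
  have hxcont : ContinuousOn x (Icc s1 σ) := fun s hs =>
    (hd s (hs1mem.1.trans hs.1)).continuousAt.continuousWithinAt
  set W : Set ℝ := {s | s ∈ Icc s1 σ ∧ x s ≤ r'} with hWdef
  have hWc : IsClosed W := by
    have : W = Icc s1 σ ∩ x ⁻¹' Iic r' := by ext s; simp [hWdef, mem_Iic]
    rw [this]
    exact hxcont.preimage_isClosed_of_isClosed isClosed_Icc isClosed_Iic
  have hWbdd : BddAbove W := bddAbove_Icc.mono fun s hs => hs.1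
  have hWne : W.Nonempty := ⟨s1, ⟨le_rfl, hs1σ.le⟩, hs1⟩
  set τ : ℝ := sSup W with hτdef
  have hτW : τ ∈ W := hWc.csSup_mem hWne hWbdd
  obtain ⟨⟨hτs1, hτσ⟩, hxτle⟩ := hτW
  have hτltσ : τ < σ := by
    rcases lt_or_eq_of_le hτσ with h | h
    · exact h
    · rw [h] at hxτle; linarith
  have hafter : ∀ s ∈ Ioc τ σ, r' < x s := by
    intro s hs
    by_contra hle
    push_neg at hle
    have hsW : s ∈ W := ⟨⟨hτs1.trans hs.1.le, hs.2⟩, hle⟩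
    exact absurd (le_csSup hWbdd hsW) (not_le.2 hs.1)
  have hτS : τ ∈ Ici S := hs1mem.1.trans hτs1
  have hxτge : r' ≤ x τ := by
    have hne : (𝓝[Ioc τ σ] τ).NeBot := by
      rw [nhdsWithin_Ioc_eq_nhdsGT hτltσ]; infer_instance
    have ht : Tendsto x (𝓝[Ioc τ σ] τ) (𝓝 (x τ)) :=
      ((hd τ hτS).continuousAt.tendsto).mono_left nhdsWithin_le_nhds
    refine ge_of_tendsto ht ?_
    filter_upwards [self_mem_nhdsWithin] with s hs
    exact (hafter s hs).le
  have hxτ : x τ = r' := le_antisymm hxτle hxτge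
  have hdd : HasDerivWithinAt x (gx τ * (y τ * z τ - x τ)) (Icc τ σ) τ :=
    (hd τ hτS).hasDerivWithinAt
  have hge := deriv_nonneg_of_right_min hτltσ hdd
    (fun s hs => by rw [hxτ]; exact (hafter s hs).le)
  have := hkey τ hτS (hxτ ▸ le_rfl)
  linarith

lemma tendsto_components {g0 gp gm : ℝ → ℝ} {c q sstar S1 : ℝ} {b : ℝ → ℝ × ℝ × ℝ}
    (hq0 : 0 < q) (hq : q < 1) (hc : 0 < c) (hS1 : sstar ≤ S1)
    (hbD : ∀ t ∈ Ici sstar, HasDerivAt b (vf g0 gp gm t (b t)) t)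
    (hbnd : ∀ t ∈ Ici sstar, (0 < (b t).1 ∧ (b t).1 < q) ∧
      (0 < (b t).2.1 ∧ (b t).2.1 < q) ∧ (0 < (b t).2.2 ∧ (b t).2.2 < q))
    (hgc0 : ∀ s ∈ Ici S1, c ≤ g0 s) (hgcp : ∀ s ∈ Ici S1, c ≤ gp s)
    (hgcm : ∀ s ∈ Ici S1, c ≤ gm s) :
    Tendsto (fun s => (b s).1) atTop (nhds 0) ∧
    Tendsto (fun s => (b s).2.1) atTop (nhds 0) ∧
    Tendsto (fun s => (b s).2.2) atTop (nhds 0) := by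
  -- component derivatives
  have hd1 : ∀ s ∈ Ici sstar, HasDerivAt (fun u => (b u).1)
      (g0 s * ((b s).2.1 * (b s).2.2 - (b s).1)) s := fun s hs =>
    (ContinuousLinearMap.fst ℝ ℝ (ℝ × ℝ)).hasFDerivAt.comp_hasDerivAt s (hbD s hs)
  have hd2 : ∀ s ∈ Ici sstar, HasDerivAt (fun u => (b u).2.1)
      (gp s * ((b s).1 * (b s).2.2 - (b s).2.1)) s := fun s hs =>
    (ContinuousLinearMap.fst ℝ ℝ ℝ).hasFDerivAt.comp_hasDerivAt s
      ((ContinuousLinearMap.snd ℝ ℝ (ℝ × ℝ)).hasFDerivAt.comp_hasDerivAt s (hbD s hs))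
  have hd3 : ∀ s ∈ Ici sstar, HasDerivAt (fun u => (b u).2.2)
      (gm s * ((b s).1 * (b s).2.1 - (b s).2.2)) s := fun s hs =>
    (ContinuousLinearMap.snd ℝ ℝ ℝ).hasFDerivAt.comp_hasDerivAt s
      ((ContinuousLinearMap.snd ℝ ℝ (ℝ × ℝ)).hasFDerivAt.comp_hasDerivAt s (hbD s hs))
  -- the iteration sequence
  set r : ℕ → ℝ := fun k => (fun u => (u ^ 2 + u) / 2)^[k] q with hrdef
  have hr0 : r 0 = q := rfl
  have hrsucc : ∀ k, r (k + 1) = ((r k) ^ 2 + r k) / 2 := by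
    intro k
    show (fun u => (u ^ 2 + u) / 2)^[k+1] q = ((r k) ^ 2 + r k) / 2
    rw [Function.iterate_succ_apply']
  have hrpos : ∀ k, 0 < r k ∧ r k < 1 := by
    intro k
    induction k with
    | zero => exact ⟨hq0, hq⟩
    | succ k ih =>
      rw [hrsucc k]
      constructor
      · nlinarith [ih.1]
      · nlinarith [ih.1, ih.2]
  have hrq : ∀ k, r k ≤ q := by
    intro k
    induction k with
    | zero => exact le_rfl
    | succ k ih =>
      rw [hrsucc k]
      nlinarith [(hrpos k).1, (hrpos k).2]
  -- geometric bound and convergence of r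
  have hrgeo : ∀ k, r k ≤ q * ((1 + q) / 2) ^ k := by
    intro k
    induction k with
    | zero => rw [hr0]; norm_num
    | succ k ih =>
      rw [hrsucc k, show ((1 + q) / 2) ^ (k + 1) = ((1 + q) / 2) ^ k * ((1 + q) / 2) from pow_succ _ _]
      have h1 := (hrpos k).1
      have h2 := hrq k
      have hM : (0:ℝ) ≤ q * ((1 + q) / 2) ^ k := by positivity
      nlinarith [mul_le_mul ih (show r k + 1 ≤ q + 1 by linarith)
        (by linarith : (0:ℝ) ≤ r k + 1) hM]
  have hrtend : Tendsto r atTop (nhds 0) := by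
    have hgeo : Tendsto (fun k : ℕ => q * ((1 + q) / 2) ^ k) atTop (nhds 0) := by
      have : Tendsto (fun k : ℕ => ((1 + q) / 2) ^ k) atTop (nhds 0) := by
        apply tendsto_pow_atTop_nhds_zero_of_lt_one (by linarith) (by linarith)
      simpa using this.const_mul q
    refine tendsto_of_tendsto_of_tendsto_of_le_of_le tendsto_const_nhds hgeo ?_ ?_
    · exact fun k => (hrpos k).1.le
    · exact hrgeo
  -- iterated bounds
  have hiter : ∀ k : ℕ, ∃ S ≥ S1, ∀ s ∈ Ici S,
      (b s).1 ≤ r k ∧ (b s).2.1 ≤ r k ∧ (b s).2.2 ≤ r k := by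
    intro k
    induction k with
    | zero =>
      refine ⟨S1, le_rfl, fun s hs => ?_⟩
      have hb := hbnd s (hS1.trans hs)
      exact ⟨hb.1.2.le, hb.2.1.2.le, hb.2.2.2.le⟩
    | succ k ih =>
      obtain ⟨S, hS, hbound⟩ := ih
      have hsub : Ici S ⊆ Ici sstar := fun s hs => (hS1.trans hS).trans hs
      have hsubS1 : Ici S ⊆ Ici S1 := fun s hs => hS.trans hs
      have hrr' : r k * r k < r (k + 1) := by
        rw [hrsucc k]
        nlinarith [(hrpos k).1, (hrpos k).2]
      have hr'r : r (k + 1) ≤ r k := by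
        rw [hrsucc k]
        nlinarith [(hrpos k).1, (hrpos k).2]
      have hpos : ∀ s ∈ Ici S, (0 < (b s).1 ∧ 0 < (b s).2.1 ∧ 0 < (b s).2.2) := by
        intro s hs
        have hb := hbnd s (hsub hs)
        exact ⟨hb.1.1, hb.2.1.1, hb.2.2.1⟩
      obtain ⟨S1', hS1', h1'⟩ := descent_step hc (hrpos k).1 hrr' hr'r
        (fun s hs => hd1 s (hsub hs)) (fun s hs => hgc0 s (hsubS1 hs))
        (fun s hs => (hpos s hs).2.1.le) (fun s hs => (hbound s hs).2.1)
        (fun s hs => (hpos s hs).2.2.le) (fun s hs => (hbound s hs).2.2)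
        (fun s hs => (hbound s hs).1)
      obtain ⟨S2', hS2', h2'⟩ := descent_step hc (hrpos k).1 hrr' hr'r
        (fun s hs => hd2 s (hsub hs)) (fun s hs => hgcp s (hsubS1 hs))
        (fun s hs => (hpos s hs).1.le) (fun s hs => (hbound s hs).1)
        (fun s hs => (hpos s hs).2.2.le) (fun s hs => (hbound s hs).2.2)
        (fun s hs => (hbound s hs).2.1)
      obtain ⟨S3', hS3', h3'⟩ := descent_step hc (hrpos k).1 hrr' hr'r
        (fun s hs => hd3 s (hsub hs)) (fun s hs => hgcm s (hsubS1 hs))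
        (fun s hs => (hpos s hs).1.le) (fun s hs => (hbound s hs).1)
        (fun s hs => (hpos s hs).2.1.le) (fun s hs => (hbound s hs).2.1)
        (fun s hs => (hbound s hs).2.2)
      refine ⟨max S1' (max S2' S3'), hS.trans (hS1'.trans (le_max_left _ _)), ?_⟩
      intro s hs
      have hs1 : s ∈ Ici S1' := mem_Ici.2 (le_trans (le_max_left _ _) (mem_Ici.1 hs))
      have hs2 : s ∈ Ici S2' := mem_Ici.2 (le_trans ((le_max_left _ _).trans (le_max_right _ _)) (mem_Ici.1 hs))
      have hs3 : s ∈ Ici S3' := mem_Ici.2 (le_trans ((le_max_right _ _).trans (le_max_right _ _)) (mem_Ici.1 hs))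
      exact ⟨h1' s hs1, h2' s hs2, h3' s hs3⟩
  -- conclude convergence of each component
  have hcomp : ∀ (φ : ℝ → ℝ), (∀ s ∈ Ici sstar, 0 < φ s) →
      (∀ k : ℕ, ∃ S ≥ S1, ∀ s ∈ Ici S, φ s ≤ r k) → Tendsto φ atTop (nhds 0) := by
    intro φ hφpos hφbd
    rw [Metric.tendsto_atTop]
    intro ε hε
    obtain ⟨k, hk⟩ := (hrtend.eventually (gt_mem_nhds hε)).exists
    obtain ⟨S, hS, hbd⟩ := hφbd k
    refine ⟨max S sstar, fun s hs => ?_⟩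
    have hsS : s ∈ Ici S := le_trans (le_max_left _ _) hs
    have hss : s ∈ Ici sstar := le_trans (le_max_right _ _) hs
    rw [Real.dist_eq, sub_zero, abs_of_pos (hφpos s hss)]
    exact lt_of_le_of_lt (hbd s hsS) hk
  refine ⟨hcomp _ (fun s hs => (hbnd s hs).1.1)
      (fun k => (hiter k).imp fun S hS => ⟨hS.1, fun s hs => (hS.2 s hs).1⟩), ?_, ?_⟩
  · exact hcomp _ (fun s hs => (hbnd s hs).2.1.1)
      (fun k => (hiter k).imp fun S hS => ⟨hS.1, fun s hs => (hS.2 s hs).2.1⟩)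
  · exact hcomp _ (fun s hs => (hbnd s hs).2.2.1)
      (fun k => (hiter k).imp fun S hS => ⟨hS.1, fun s hs => (hS.2 s hs).2.2⟩)

lemma global_exists {g0 gp gm : ℝ → ℝ} {G δ q sstar T : ℝ} {A : ℝ → ℝ × ℝ × ℝ}
    (hc0 : Continuous g0) (hcp : Continuous gp) (hcm : Continuous gm)
    (hg0pos : ∀ t, 0 < g0 t) (hgppos : ∀ t, 0 < gp t) (hgmpos : ∀ t, 0 < gm t)
    (hG0 : ∀ t, g0 t ≤ G) (hGp : ∀ t, gp t ≤ G) (hGm : ∀ t, gm t ≤ G) (hG1 : 1 ≤ G)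
    (hδ : 0 < δ) (hq : q < 1) (hsT : sstar ≤ T)
    (hA : ∀ t ∈ Icc sstar T, HasDerivAt A (vf g0 gp gm t (A t)) t)
    (h1l : δ < (A sstar).1) (h1u : (A sstar).1 < q)
    (h2l : δ < (A sstar).2.1) (h2u : (A sstar).2.1 < q)
    (h3l : δ < (A sstar).2.2) (h3u : (A sstar).2.2 < q) :
    ∃ b : ℝ → ℝ × ℝ × ℝ, (∀ s, s ≤ T → b s = A s) ∧
      (∀ t ∈ Ici sstar, HasDerivAt b (vf g0 gp gm t (b t)) t) := by
  have hGpos : (0:ℝ) < G := lt_of_lt_of_le one_pos hG1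
  set h : ℝ := 1 / (6 * G) with hhdef
  have hh : 0 < h := by rw [hhdef]; positivity
  have hg00 : ∀ t, 0 ≤ g0 t := fun t => (hg0pos t).le
  have hgp0 : ∀ t, 0 ≤ gp t := fun t => (hgppos t).le
  have hgm0 : ∀ t, 0 ≤ gm t := fun t => (hgmpos t).le
  have hq0 : (0:ℝ) < q := hδ.trans (h1l.trans h1u)
  -- norm helper
  have hnorm : ∀ p : ℝ × ℝ × ℝ, 0 ≤ p.1 → p.1 ≤ 1 → 0 ≤ p.2.1 → p.2.1 ≤ 1 →
      0 ≤ p.2.2 → p.2.2 ≤ 1 → ‖p‖ ≤ 1 := by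
    intro p a1 a2 a3 a4 a5 a6
    show (max ‖p.1‖ (max ‖p.2.1‖ ‖p.2.2‖) : ℝ) ≤ 1
    refine max_le ?_ (max_le ?_ ?_) <;> rw [Real.norm_eq_abs, abs_le] <;>
      constructor <;> linarith
  -- invariance corollary: positivity and q-bound
  have hinv : ∀ B, sstar ≤ B → ∀ bb : ℝ → ℝ × ℝ × ℝ,
      (∀ t ∈ Icc sstar B, HasDerivWithinAt bb (vf g0 gp gm t (bb t)) (Icc sstar B) t) →
      bb sstar = A sstar → ∀ t ∈ Icc sstar B,
      (0 < (bb t).1 ∧ (bb t).1 < q) ∧ (0 < (bb t).2.1 ∧ (bb t).2.1 < q) ∧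
      (0 < (bb t).2.2 ∧ (bb t).2.2 < q) := by
    intro B hB bb hbb hbbinit
    have := invariance hg0pos hgppos hgmpos hG0 hGp hGm hδ hq hB hbb
      (hbbinit ▸ h1l) (hbbinit ▸ h1u) (hbbinit ▸ h2l) (hbbinit ▸ h2u)
      (hbbinit ▸ h3l) (hbbinit ▸ h3u)
    intro t ht
    obtain ⟨⟨a1, a2⟩, ⟨a3, a4⟩, a5, a6⟩ := this t ht
    have hβ : 0 < δ * Real.exp (-(G + 1) * (t - sstar)) := by positivity
    exact ⟨⟨hβ.trans a1, a2⟩, ⟨hβ.trans a3, a4⟩, hβ.trans a5, a6⟩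
  -- uniqueness
  have huniq : ∀ B, sstar ≤ B → ∀ b c : ℝ → ℝ × ℝ × ℝ,
      (∀ t ∈ Icc sstar B, HasDerivWithinAt b (vf g0 gp gm t (b t)) (Icc sstar B) t) →
      (∀ t ∈ Icc sstar B, HasDerivWithinAt c (vf g0 gp gm t (c t)) (Icc sstar B) t) →
      b sstar = A sstar → c sstar = A sstar → EqOn b c (Icc sstar B) := by
    intro B hB b c hbD hcD hbi hci
    have hball : ∀ bb : ℝ → ℝ × ℝ × ℝ,
        (∀ t ∈ Icc sstar B, HasDerivWithinAt bb (vf g0 gp gm t (bb t)) (Icc sstar B) t) →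
        bb sstar = A sstar →
        ∀ t ∈ Ico sstar B, bb t ∈ Metric.closedBall (0 : ℝ × ℝ × ℝ) 2 := by
      intro bb hbbD hbbi t ht
      obtain ⟨⟨a1, a2⟩, ⟨a3, a4⟩, a5, a6⟩ := hinv B hB bb hbbD hbbi t ⟨ht.1, ht.2.le⟩
      rw [Metric.mem_closedBall, dist_zero_right]
      exact le_trans (hnorm _ a1.le (by linarith) a3.le (by linarith) a5.le (by linarith))
        one_le_two
    have hIci : ∀ (bb : ℝ → ℝ × ℝ × ℝ),
        (∀ t ∈ Icc sstar B, HasDerivWithinAt bb (vf g0 gp gm t (bb t)) (Icc sstar B) t) →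
        ∀ t ∈ Ico sstar B, HasDerivWithinAt bb (vf g0 gp gm t (bb t)) (Ici t) t := by
      intro bb hbbD t ht
      refine (hbbD t ⟨ht.1, ht.2.le⟩).mono_of_mem_nhdsWithin ?_
      refine mem_nhdsWithin.2 ⟨Iio B, isOpen_Iio, ht.2, ?_⟩
      rintro s ⟨hs1, hs2⟩
      exact ⟨ht.1.trans hs2, hs1.le⟩
    exact ODE_solution_unique_of_mem_Icc_right
      (fun t _ => vf_lipschitz hg00 hgp0 hgm0 hG0 hGp hGm t)
      (fun t ht => (hbD t ht).continuousWithinAt) (hIci b hbD) (hball b hbD hbi)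
      (fun t ht => (hcD t ht).continuousWithinAt) (hIci c hcD) (hball c hcD hci)
      (hbi.trans hci.symm)
  -- inductive extension
  have hstep : ∀ n : ℕ, ∃ b : ℝ → ℝ × ℝ × ℝ, (∀ s ∈ Icc sstar T, b s = A s) ∧
      ∀ t ∈ Icc sstar (T + n * h),
        HasDerivWithinAt b (vf g0 gp gm t (b t)) (Icc sstar (T + n * h)) t := by
    intro n
    induction n with
    | zero =>
      refine ⟨A, fun s _ => rfl, ?_⟩
      have e : T + (0:ℕ) * h = T := by norm_num
      rw [e]
      exact fun t ht => (hA t ht).hasDerivWithinAt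
    | succ n ih =>
      obtain ⟨bn, hbnA, hbnD⟩ := ih
      set Bn : ℝ := T + n * h with hBndef
      have hBn : sstar ≤ Bn := hsT.trans (by rw [hBndef]; nlinarith [hh.le])
      have hbninit : bn sstar = A sstar := hbnA sstar ⟨le_rfl, hsT⟩
      have hend := hinv Bn hBn bn hbnD hbninit Bn ⟨hBn, le_rfl⟩
      obtain ⟨⟨a1, a2⟩, ⟨a3, a4⟩, a5, a6⟩ := hend
      have hxnorm : ‖bn Bn‖ ≤ 1 :=
        hnorm _ a1.le (by linarith) a3.le (by linarith) a5.le (by linarith)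
      obtain ⟨f, hf0, hfD⟩ := local_exists hc0 hcp hcm hg00 hgp0 hgm0 hG0 hGp hGm hG1
        Bn (bn Bn) hxnorm
      rw [← hhdef] at hfD
      refine ⟨fun s => if s ≤ Bn then bn s else f s, ?_, ?_⟩
      · intro s hs
        show (if s ≤ Bn then bn s else f s) = A s
        have hTBn : T ≤ Bn := by rw [hBndef]; nlinarith [hh.le]
        rw [if_pos (hs.2.trans hTBn)]
        exact hbnA s hs
      · have eB : T + (((n:ℕ) + 1 : ℕ) : ℝ) * h = Bn + h := by rw [hBndef]; push_cast; ring
        intro t ht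
        rw [eB] at ht ⊢
        show HasDerivWithinAt _ (vf g0 gp gm t (if t ≤ Bn then bn t else f t))
          (Icc sstar (Bn + h)) t
        have hBh : Bn ≤ Bn + h := by linarith
        rcases lt_trichotomy t Bn with hlt | heq | hgt
        · have hmem : Icc sstar Bn ∈ 𝓝[Icc sstar (Bn + h)] t := by
            refine mem_nhdsWithin.2 ⟨Iio Bn, isOpen_Iio, hlt, ?_⟩
            rintro s ⟨hs1, hs2⟩
            exact ⟨hs2.1, hs1.le⟩
          have hd := (hbnD t ⟨ht.1, hlt.le⟩).mono_of_mem_nhdsWithin hmem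
          rw [if_pos hlt.le]
          refine hd.congr_of_eventuallyEq ?_ (if_pos hlt.le)
          filter_upwards [mem_nhdsWithin_of_mem_nhds (Iio_mem_nhds hlt)] with s hs
          exact if_pos hs.le
        · rw [heq, if_pos le_rfl]
          have hleft : HasDerivWithinAt (fun s => if s ≤ Bn then bn s else f s)
              (vf g0 gp gm Bn (bn Bn)) (Icc sstar Bn) Bn :=
            (hbnD Bn ⟨hBn, le_rfl⟩).congr (fun s hs => if_pos hs.2) (if_pos le_rfl)
          have hright : HasDerivWithinAt (fun s => if s ≤ Bn then bn s else f s)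
              (vf g0 gp gm Bn (bn Bn)) (Icc Bn (Bn + h)) Bn := by
            have hd := hfD Bn (left_mem_Icc.2 hBh)
            rw [hf0] at hd
            refine hd.congr ?_ (by rw [if_pos le_rfl]; exact hf0.symm)
            intro s hs
            by_cases hc : s ≤ Bn
            · have hsBn : s = Bn := le_antisymm hc hs.1
              rw [if_pos hc, hsBn, hf0]
            · rw [if_neg hc]
          have hu := hleft.union hright
          rw [Set.Icc_union_Icc_eq_Icc hBn hBh] at hu
          exact hu
        · have hmem : Icc Bn (Bn + h) ∈ 𝓝[Icc sstar (Bn + h)] t := by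
            refine mem_nhdsWithin.2 ⟨Ioi Bn, isOpen_Ioi, hgt, ?_⟩
            rintro s ⟨hs1, hs2⟩
            exact ⟨hs1.le, hs2.2⟩
          have hd := (hfD t ⟨hgt.le, ht.2⟩).mono_of_mem_nhdsWithin hmem
          rw [if_neg (not_le.2 hgt)]
          refine hd.congr_of_eventuallyEq ?_ (if_neg (not_le.2 hgt))
          filter_upwards [mem_nhdsWithin_of_mem_nhds (Ioi_mem_nhds hgt)] with s hs
          exact if_neg (not_le.2 hs)
  -- choose solutions
  set sol : ℕ → ℝ → ℝ × ℝ × ℝ := fun n => (hstep n).choose with hsoldef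
  have hsolA : ∀ n : ℕ, ∀ s ∈ Icc sstar T, sol n s = A s := fun n => (hstep n).choose_spec.1
  have hsolD : ∀ n : ℕ, ∀ t ∈ Icc sstar (T + (n : ℝ) * h),
      HasDerivWithinAt (sol n) (vf g0 gp gm t (sol n t)) (Icc sstar (T + (n : ℝ) * h)) t :=
    fun n => (hstep n).choose_spec.2
  have hsolinit : ∀ n, sol n sstar = A sstar := fun n => hsolA n sstar ⟨le_rfl, hsT⟩
  have hTn : ∀ n : ℕ, sstar ≤ T + n * h := fun n => hsT.trans (by nlinarith [hh.le])
  have hagree : ∀ n m : ℕ, n ≤ m → EqOn (sol n) (sol m) (Icc sstar (T + n * h)) := by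
    intro n m hnm
    have hle : T + n * h ≤ T + m * h := by
      have := mul_le_mul_of_nonneg_right (Nat.cast_le.2 hnm : (n:ℝ) ≤ m) hh.le
      linarith
    refine huniq (T + n * h) (hTn n) _ _ (hsolD n) ?_ (hsolinit n) (hsolinit m)
    intro t ht
    exact (hsolD m t ⟨ht.1, ht.2.trans hle⟩).mono (Icc_subset_Icc le_rfl hle)
  set N : ℝ → ℕ := fun s => ⌈(s + 1 - T) / h⌉₊ with hNdef
  have hN : ∀ s, s + 1 ≤ T + (N s) * h := by
    intro s
    have h1 : (s + 1 - T) / h ≤ (N s : ℝ) := Nat.le_ceil _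
    have h2 := mul_le_mul_of_nonneg_right h1 hh.le
    rw [div_mul_cancel₀ _ hh.ne'] at h2
    linarith
  set bg : ℝ → ℝ × ℝ × ℝ := fun s => if s ≤ T then A s else sol (N s) s with hbgdef
  have hbA : ∀ s, s ≤ T → bg s = A s := fun s hs => if_pos hs
  have hbsol : ∀ n : ℕ, ∀ s ∈ Icc sstar (T + n * h), bg s = sol n s := by
    intro n s hs
    by_cases hsT' : s ≤ T
    · rw [hbA s hsT']
      exact (hsolA n s ⟨hs.1, hsT'⟩).symm
    · have hbg : bg s = sol (N s) s := if_neg hsT'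
      rw [hbg]
      have hs1 : s ∈ Icc sstar (T + (N s) * h) := ⟨hs.1, by linarith [hN s]⟩
      rcases le_total (N s) n with hc | hc
      · exact hagree (N s) n hc hs1
      · exact (hagree n (N s) hc hs).symm
  refine ⟨bg, hbA, ?_⟩
  intro t ht
  set n : ℕ := N t with hndef
  have hn : t + 1 ≤ T + n * h := hN t
  have hsub : EqOn bg (sol n) (Icc sstar (T + n * h)) := fun s hs => hbsol n s hs
  rcases eq_or_lt_of_le (mem_Ici.1 ht) with heq | hlt
  · -- t = sstar
    have hAd : HasDerivAt A (vf g0 gp gm sstar (A sstar)) sstar := hA sstar ⟨le_rfl, hsT⟩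
    have hleft : HasDerivWithinAt bg (vf g0 gp gm sstar (A sstar)) (Iic sstar) sstar :=
      (hAd.hasDerivWithinAt).congr (fun s hs => hbA s (le_trans hs hsT)) (hbA sstar hsT)
    have hsstarmem : sstar ∈ Icc sstar (T + n * h) := ⟨le_rfl, hTn n⟩
    have hlt2 : sstar < T + (n : ℝ) * h := by rw [heq]; linarith
    have hmem : Icc sstar (T + (n : ℝ) * h) ∈ 𝓝[Ici sstar] sstar := by
      refine mem_nhdsWithin.2 ⟨Iio (T + (n : ℝ) * h), isOpen_Iio, hlt2, ?_⟩
      rintro s ⟨hs1, hs2⟩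
      exact ⟨hs2, hs1.le⟩
    have hd := (hsolD n sstar hsstarmem).mono_of_mem_nhdsWithin hmem
    have hd2 : HasDerivWithinAt bg (vf g0 gp gm sstar (sol n sstar)) (Ici sstar) sstar := by
      refine hd.congr_of_eventuallyEq ?_ (hsub hsstarmem)
      filter_upwards [hmem] with s hs
      exact hsub hs
    rw [hsolinit n] at hd2
    have hu := hleft.union hd2
    rw [Iic_union_Ici] at hu
    have := hasDerivWithinAt_univ.1 hu
    rw [← heq]
    rw [hbA sstar hsT]
    exact this
  · -- sstar < t
    have hIccmem : Icc sstar (T + n * h) ∈ 𝓝 t := Icc_mem_nhds hlt (by linarith)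
    have hd := (hsolD n t ⟨ht, by linarith⟩).hasDerivAt hIccmem
    rw [show bg t = sol n t from hsub ⟨ht, by linarith⟩]
    refine hd.congr_of_eventuallyEq ?_
    filter_upwards [hIccmem] with s hs
    exact hsub hs

/-- A solution of the reparametrized instanton ODE system lying in `S0` at some initial
time `s* > 0` extends to all of `[s*, ∞)` and converges to `(0,0,0)` as `s → ∞`.  The
coefficients `g0, g₊, g₋` are continuous, strictly positive on `(0,∞)`, and converge to
strictly positive limits `C0, C₊, C₋` at infinity. -/
theorem SZero_solutions_tend_to_zero (g0 gp gm : ℝ → ℝ) (C0 Cp Cm : ℝ)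
    (hg0c : ContinuousOn g0 (Ioi 0)) (hgpc : ContinuousOn gp (Ioi 0))
    (hgmc : ContinuousOn gm (Ioi 0))
    (hg0 : ∀ s ∈ Ioi (0 : ℝ), 0 < g0 s) (hgp : ∀ s ∈ Ioi (0 : ℝ), 0 < gp s)
    (hgm : ∀ s ∈ Ioi (0 : ℝ), 0 < gm s)
    (hC0 : 0 < C0) (hCp : 0 < Cp) (hCm : 0 < Cm)
    (hl0 : Tendsto g0 atTop (nhds C0)) (hlp : Tendsto gp atTop (nhds Cp))
    (hlm : Tendsto gm atTop (nhds Cm))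
    (sstar T : ℝ) (hs : 0 < sstar) (hsT : sstar ≤ T)
    (a0 ap am : ℝ → ℝ)
    (hsol : IsSolInstB2 g0 gp gm a0 ap am (Icc sstar T))
    (hinit : (a0 sstar, ap sstar, am sstar) ∈ SZero) :
    ∃ b0 bp bm : ℝ → ℝ,
      IsSolInstB2 g0 gp gm b0 bp bm (Ici sstar) ∧
      (∀ s ∈ Icc sstar T, b0 s = a0 s ∧ bp s = ap s ∧ bm s = am s) ∧
      Tendsto (fun s => (b0 s, bp s, bm s)) atTop (nhds ((0 : ℝ), (0 : ℝ), (0 : ℝ))) := by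
  classical
  simp only [SZero, Set.mem_setOf_eq] at hinit
  obtain ⟨i1, i2, i3, i4, i5, i6, i7, i8, i9⟩ := hinit
  have ha0pos : 0 < a0 sstar := i1.trans i2
  have happos : 0 < ap sstar := i4.trans i5
  have hampos : 0 < am sstar := i7.trans i8
  set δ : ℝ := min (a0 sstar) (min (ap sstar) (am sstar)) / 2 with hδdef
  set q : ℝ := (1 + max (a0 sstar) (max (ap sstar) (am sstar))) / 2 with hqdef
  have hminpos : 0 < min (a0 sstar) (min (ap sstar) (am sstar)) :=
    lt_min ha0pos (lt_min happos hampos)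
  have hδpos : 0 < δ := by rw [hδdef]; linarith
  have hmaxlt1 : max (a0 sstar) (max (ap sstar) (am sstar)) < 1 := max_lt i3 (max_lt i6 i9)
  have hmaxpos : 0 < max (a0 sstar) (max (ap sstar) (am sstar)) :=
    lt_of_lt_of_le ha0pos (le_max_left _ _)
  have hq1 : q < 1 := by rw [hqdef]; linarith
  have hq0 : 0 < q := by rw [hqdef]; linarith
  have hδa0 : δ < a0 sstar := by
    have := min_le_left (a0 sstar) (min (ap sstar) (am sstar)); rw [hδdef]; linarith
  have hδap : δ < ap sstar := by
    have := (min_le_left (ap sstar) (am sstar)).trans'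
      (min_le_right (a0 sstar) (min (ap sstar) (am sstar)))
    rw [hδdef]; linarith
  have hδam : δ < am sstar := by
    have := (min_le_right (ap sstar) (am sstar)).trans'
      (min_le_right (a0 sstar) (min (ap sstar) (am sstar)))
    rw [hδdef]; linarith
  have ha0q : a0 sstar < q := by
    have := le_max_left (a0 sstar) (max (ap sstar) (am sstar)); rw [hqdef]; linarith
  have hapq : ap sstar < q := by
    have := (le_max_left (ap sstar) (am sstar)).trans
      (le_max_right (a0 sstar) (max (ap sstar) (am sstar)))
    rw [hqdef]; linarith
  have hamq : am sstar < q := by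
    have := (le_max_right (ap sstar) (am sstar)).trans
      (le_max_right (a0 sstar) (max (ap sstar) (am sstar)))
    rw [hqdef]; linarith
  -- clamped coefficients
  have hIci : Ici sstar ⊆ Ioi (0:ℝ) := fun x hx => lt_of_lt_of_le hs hx
  set gc0 : ℝ → ℝ := fun t => g0 (max t sstar) with hgc0def
  set gcp : ℝ → ℝ := fun t => gp (max t sstar) with hgcpdef
  set gcm : ℝ → ℝ := fun t => gm (max t sstar) with hgcmdef
  have hmaxc : Continuous (fun t : ℝ => max t sstar) := continuous_id.max continuous_const
  have hmaxmem : ∀ t : ℝ, max t sstar ∈ Ioi (0:ℝ) := fun t => hIci (mem_Ici.2 (le_max_right _ _))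
  have hc0 : Continuous gc0 := hg0c.comp_continuous hmaxc hmaxmem
  have hcp : Continuous gcp := hgpc.comp_continuous hmaxc hmaxmem
  have hcm : Continuous gcm := hgmc.comp_continuous hmaxc hmaxmem
  have hpos0 : ∀ t, 0 < gc0 t := fun t => hg0 _ (hmaxmem t)
  have hposp : ∀ t, 0 < gcp t := fun t => hgp _ (hmaxmem t)
  have hposm : ∀ t, 0 < gcm t := fun t => hgm _ (hmaxmem t)
  have heq0 : ∀ t, sstar ≤ t → gc0 t = g0 t := fun t ht => by show g0 (max t sstar) = g0 t; rw [max_eq_left ht]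
  have heqp : ∀ t, sstar ≤ t → gcp t = gp t := fun t ht => by show gp (max t sstar) = gp t; rw [max_eq_left ht]
  have heqm : ∀ t, sstar ≤ t → gcm t = gm t := fun t ht => by show gm (max t sstar) = gm t; rw [max_eq_left ht]
  obtain ⟨G0, hG0bd⟩ := exists_bound_of_tendsto (hg0c.mono hIci) hl0
  obtain ⟨Gp, hGpbd⟩ := exists_bound_of_tendsto (hgpc.mono hIci) hlp
  obtain ⟨Gm, hGmbd⟩ := exists_bound_of_tendsto (hgmc.mono hIci) hlm
  set G : ℝ := max 1 (max G0 (max Gp Gm)) with hGdef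
  have hG1 : 1 ≤ G := le_max_left _ _
  have hbd0 : ∀ t, gc0 t ≤ G := fun t =>
    (hG0bd _ (le_max_right t sstar)).trans
      ((le_max_left _ _).trans (le_max_right _ _))
  have hbdp : ∀ t, gcp t ≤ G := fun t =>
    (hGpbd _ (le_max_right t sstar)).trans
      (((le_max_left _ _).trans (le_max_right _ _)).trans (le_max_right _ _))
  have hbdm : ∀ t, gcm t ≤ G := fun t =>
    (hGmbd _ (le_max_right t sstar)).trans
      (((le_max_right _ _).trans (le_max_right _ _)).trans (le_max_right _ _))
  -- the solution as a curve
  set A : ℝ → ℝ × ℝ × ℝ := fun s => (a0 s, ap s, am s) with hAdef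
  have hA : ∀ t ∈ Icc sstar T, HasDerivAt A (vf gc0 gcp gcm t (A t)) t := by
    intro t ht
    obtain ⟨hh0, hhp, hhm⟩ := hsol t ht
    show HasDerivAt A
      (gc0 t * (ap t * am t - a0 t), gcp t * (a0 t * am t - ap t),
        gcm t * (a0 t * ap t - am t)) t
    rw [heq0 t ht.1, heqp t ht.1, heqm t ht.1]
    exact hh0.prodMk (hhp.prodMk hhm)
  obtain ⟨b, hbA, hbD⟩ := global_exists hc0 hcp hcm hpos0 hposp hposm hbd0 hbdp hbdm hG1
    hδpos hq1 hsT hA hδa0 ha0q hδap hapq hδam hamq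
  have hbsstar : b sstar = A sstar := hbA sstar hsT
  -- bounds along the flow
  have hbnd : ∀ t ∈ Ici sstar, (0 < (b t).1 ∧ (b t).1 < q) ∧
      (0 < (b t).2.1 ∧ (b t).2.1 < q) ∧ (0 < (b t).2.2 ∧ (b t).2.2 < q) := by
    intro t ht
    have hb' : ∀ u ∈ Icc sstar t, HasDerivWithinAt b (vf gc0 gcp gcm u (b u)) (Icc sstar t) u :=
      fun u hu => (hbD u hu.1).hasDerivWithinAt
    have hi := invariance hpos0 hposp hposm hbd0 hbdp hbdm hδpos hq1 ht hb'
      (by rw [hbsstar]; exact hδa0) (by rw [hbsstar]; exact ha0q)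
      (by rw [hbsstar]; exact hδap) (by rw [hbsstar]; exact hapq)
      (by rw [hbsstar]; exact hδam) (by rw [hbsstar]; exact hamq)
      t ⟨ht, le_rfl⟩
    obtain ⟨⟨c1, c2⟩, ⟨c3, c4⟩, c5, c6⟩ := hi
    have hβ : 0 < δ * Real.exp (-(G + 1) * (t - sstar)) := by positivity
    exact ⟨⟨hβ.trans c1, c2⟩, ⟨hβ.trans c3, c4⟩, hβ.trans c5, c6⟩
  refine ⟨fun s => (b s).1, fun s => (b s).2.1, fun s => (b s).2.2, ?_, ?_, ?_⟩
  · -- solves the system on `Ici sstar`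
    intro t ht
    have hd := hbD t ht
    refine ⟨?_, ?_, ?_⟩
    · have h1 : HasDerivAt (fun s => (b s).1)
          (gc0 t * ((b t).2.1 * (b t).2.2 - (b t).1)) t :=
        (ContinuousLinearMap.fst ℝ ℝ (ℝ × ℝ)).hasFDerivAt.comp_hasDerivAt t hd
      rw [heq0 t ht] at h1
      exact h1
    · have h1 : HasDerivAt (fun s => (b s).2.1)
          (gcp t * ((b t).1 * (b t).2.2 - (b t).2.1)) t :=
        (ContinuousLinearMap.fst ℝ ℝ ℝ).hasFDerivAt.comp_hasDerivAt t
          ((ContinuousLinearMap.snd ℝ ℝ (ℝ × ℝ)).hasFDerivAt.comp_hasDerivAt t hd)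
      rw [heqp t ht] at h1
      exact h1
    · have h1 : HasDerivAt (fun s => (b s).2.2)
          (gcm t * ((b t).1 * (b t).2.1 - (b t).2.2)) t :=
        (ContinuousLinearMap.snd ℝ ℝ ℝ).hasFDerivAt.comp_hasDerivAt t
          ((ContinuousLinearMap.snd ℝ ℝ (ℝ × ℝ)).hasFDerivAt.comp_hasDerivAt t hd)
      rw [heqm t ht] at h1
      exact h1
  · -- agrees with the original solution on `Icc sstar T`
    intro s hs
    have hA' := hbA s hs.2
    exact ⟨by show (b s).1 = a0 s; rw [hA'], by show (b s).2.1 = ap s; rw [hA'],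
      by show (b s).2.2 = am s; rw [hA']⟩
  · -- tends to zero
    set c : ℝ := min C0 (min Cp Cm) / 2 with hcdef
    have hcmin : 0 < min C0 (min Cp Cm) := lt_min hC0 (lt_min hCp hCm)
    have hc : 0 < c := by rw [hcdef]; linarith
    have hcC0 : c < C0 := by
      have := min_le_left C0 (min Cp Cm); rw [hcdef]; linarith
    have hcCp : c < Cp := by
      have := (min_le_left Cp Cm).trans' (min_le_right C0 (min Cp Cm)); rw [hcdef]; linarith
    have hcCm : c < Cm := by
      have := (min_le_right Cp Cm).trans' (min_le_right C0 (min Cp Cm)); rw [hcdef]; linarith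
    obtain ⟨S0', hS0'⟩ := eventually_atTop.1 (hl0.eventually (eventually_gt_nhds hcC0))
    obtain ⟨Sp', hSp'⟩ := eventually_atTop.1 (hlp.eventually (eventually_gt_nhds hcCp))
    obtain ⟨Sm', hSm'⟩ := eventually_atTop.1 (hlm.eventually (eventually_gt_nhds hcCm))
    set S1 : ℝ := max (max S0' Sp') (max Sm' sstar) with hS1def
    have hS1s : sstar ≤ S1 := (le_max_right Sm' sstar).trans (le_max_right _ _)
    have hg1 : ∀ s ∈ Ici S1, c ≤ gc0 s := by
      intro s hs1
      rw [heq0 s (hS1s.trans hs1)]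
      exact (hS0' s (le_trans ((le_max_left S0' Sp').trans (le_max_left _ _)) hs1)).le
    have hg2 : ∀ s ∈ Ici S1, c ≤ gcp s := by
      intro s hs1
      rw [heqp s (hS1s.trans hs1)]
      exact (hSp' s (le_trans ((le_max_right S0' Sp').trans (le_max_left _ _)) hs1)).le
    have hg3 : ∀ s ∈ Ici S1, c ≤ gcm s := by
      intro s hs1
      rw [heqm s (hS1s.trans hs1)]
      exact (hSm' s (le_trans ((le_max_left Sm' sstar).trans (le_max_right _ _)) hs1)).le
    obtain ⟨T1, T2, T3⟩ := tendsto_components hq0 hq1 hc hS1s hbD hbnd hg1 hg2 hg3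
    exact T1.prodMk_nhds (T2.prodMk_nhds T3)
end

section
/- There is no solution (a0, a+, a−) of the reparametrized instanton ODE system defined and bounded on [s*, ∞) for some s* > 0 whose value at s* lies in S∞ := {(a0,a+,a−) ∈ ℝ³ : a+a− > a0 > 1, a0a− > a+ > 1, a0a+ > a− > 1}: any solution lying in S∞ at time s* either fails to exist for all forward time or is unbounded on [s*, ∞). -/
open Set Filter

/-- The set `S∞ = {a₊a₋ > a0 > 1, a0a₋ > a₊ > 1, a0a₊ > a₋ > 1}`. -/
def SInfty : Set (ℝ × ℝ × ℝ) :=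
  {p | p.2.1 * p.2.2 > p.1 ∧ p.1 > 1 ∧ p.1 * p.2.2 > p.2.1 ∧ p.2.1 > 1 ∧
    p.1 * p.2.1 > p.2.2 ∧ p.2.2 > 1}

lemma monoOn_of_hasDerivAt {f f' : ℝ → ℝ} {s : Set ℝ} (hconv : Convex ℝ s)
    (hd : ∀ t ∈ s, HasDerivAt f (f' t) t) (hpos : ∀ t ∈ s, 0 ≤ f' t) :
    MonotoneOn f s := by
  refine monotoneOn_of_deriv_nonneg hconv
    (fun t ht => (hd t ht).continuousAt.continuousWithinAt)
    (fun t ht => ((hd t (interior_subset ht)).differentiableAt).differentiableWithinAt) ?_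
  intro t ht
  rw [(hd t (interior_subset ht)).deriv]
  exact hpos t (interior_subset ht)

lemma gronwall_pos {f f' : ℝ → ℝ} {a b K : ℝ} (hab : a ≤ b)
    (hd : ∀ t ∈ Icc a b, HasDerivAt f (f' t) t)
    (hineq : ∀ t ∈ Icc a b, -(K * f t) ≤ f' t) (hfa : 0 < f a) : 0 < f b := by
  have hHd : ∀ t ∈ Icc a b,
      HasDerivAt (fun t => f t * Real.exp (K * t)) ((f' t + K * f t) * Real.exp (K * t)) t := by
    intro t ht
    have he : HasDerivAt (fun t : ℝ => Real.exp (K * t)) (Real.exp (K * t) * (K * 1)) t :=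
      ((hasDerivAt_id t).const_mul K).exp
    have := (hd t ht).mul he
    exact this.congr_deriv (by ring)
  have hmono : MonotoneOn (fun t => f t * Real.exp (K * t)) (Icc a b) :=
    monoOn_of_hasDerivAt (convex_Icc a b) hHd
      (fun t ht => mul_nonneg (by linarith [hineq t ht]) (Real.exp_pos _).le)
  have h1 : f a * Real.exp (K * a) ≤ f b * Real.exp (K * b) :=
    hmono (left_mem_Icc.2 hab) (right_mem_Icc.2 hab) hab
  nlinarith [Real.exp_pos (K * b), Real.exp_pos (K * a), mul_pos hfa (Real.exp_pos (K * a))]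

lemma nonneg_at_right {f : ℝ → ℝ} {a b : ℝ} (hab : a < b) (hc : ContinuousAt f b)
    (h : ∀ t ∈ Ico a b, 0 ≤ f t) : 0 ≤ f b := by
  have hcl : b ∈ closure (Ico a b) := by
    rw [closure_Ico hab.ne]; exact right_mem_Icc.2 hab.le
  haveI := mem_closure_iff_nhdsWithin_neBot.mp hcl
  exact ge_of_tendsto (hc.continuousWithinAt.tendsto) (eventually_mem_nhdsWithin.mono h)

lemma exists_lim {f : ℝ → ℝ} {a M : ℝ} (hm : MonotoneOn f (Ici a))
    (hb : ∀ t ∈ Ici a, f t ≤ M) :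
    ∃ L, Tendsto f atTop (nhds L) ∧ f a ≤ L := by
  have hgm : Monotone (fun t => f (max t a)) := fun s t hst =>
    hm (le_max_right s a) (le_max_right t a) (max_le_max hst le_rfl)
  have hgb : BddAbove (range (fun t => f (max t a))) :=
    ⟨M, by rintro _ ⟨t, rfl⟩; exact hb _ (le_max_right t a)⟩
  have ht := tendsto_atTop_ciSup hgm hgb
  refine ⟨⨆ i, f (max i a), Tendsto.congr' ?_ ht, ?_⟩
  · filter_upwards [eventually_ge_atTop a] with t hta
    simp [max_eq_left hta]
  · have h2 : f (max a a) ≤ ⨆ i, f (max i a) := le_ciSup hgb a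
    simpa using h2

lemma no_linear_growth {f f' : ℝ → ℝ} {t0 δ M : ℝ} (hδ : 0 < δ)
    (hd : ∀ t ∈ Ici t0, HasDerivAt f (f' t) t)
    (hge : ∀ t ∈ Ici t0, δ ≤ f' t)
    (hb : ∀ t ∈ Ici t0, f t ≤ M) : False := by
  have hmono : MonotoneOn (fun t => f t - δ * t) (Ici t0) :=
    monoOn_of_hasDerivAt (convex_Ici t0)
      (fun t ht => (hd t ht).sub ((hasDerivAt_id t).const_mul δ))
      (fun t ht => by have := hge t ht; linarith)
  have hT0 : t0 ≤ t0 + (M - f t0 + 1) / δ := by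
    have h1 : 0 ≤ (M - f t0 + 1) / δ := div_nonneg (by linarith [hb t0 (mem_Ici.2 le_rfl)]) hδ.le
    linarith
  have h2 : f t0 - δ * t0 ≤ f (t0 + (M - f t0 + 1) / δ) - δ * (t0 + (M - f t0 + 1) / δ) :=
    hmono (mem_Ici.2 le_rfl) (mem_Ici.2 hT0) hT0
  have h3 : δ * (t0 + (M - f t0 + 1) / δ) - δ * t0 = M - f t0 + 1 := by
    field_simp; ring
  have h4 := hb _ (mem_Ici.2 hT0)
  linarith

/-- Forward invariance of `S∞` for the reparametrized instanton system. -/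
lemma SInfty_invariant (g0 gp gm : ℝ → ℝ)
    (hg0c : ContinuousOn g0 (Ioi 0)) (hgpc : ContinuousOn gp (Ioi 0))
    (hgmc : ContinuousOn gm (Ioi 0))
    (hg0 : ∀ s ∈ Ioi (0 : ℝ), 0 < g0 s) (hgp : ∀ s ∈ Ioi (0 : ℝ), 0 < gp s)
    (hgm : ∀ s ∈ Ioi (0 : ℝ), 0 < gm s)
    (sstar : ℝ) (hs : 0 < sstar)
    (a0 ap am : ℝ → ℝ)
    (hsol : IsSolInstB2 g0 gp gm a0 ap am (Ici sstar))
    (hinit : (a0 sstar, ap sstar, am sstar) ∈ SInfty) :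
    ∀ t ∈ Ici sstar, 1 < a0 t ∧ 1 < ap t ∧ 1 < am t ∧
      a0 t < ap t * am t ∧ ap t < a0 t * am t ∧ am t < a0 t * ap t := by
  simp only [SInfty, mem_setOf_eq] at hinit
  obtain ⟨i1, i2, i3, i4, i5, i6⟩ := hinit
  have hD0 : ∀ u ∈ Ici sstar, HasDerivAt a0 (g0 u * (ap u * am u - a0 u)) u :=
    fun u hu => (hsol u hu).1
  have hDp : ∀ u ∈ Ici sstar, HasDerivAt ap (gp u * (a0 u * am u - ap u)) u :=
    fun u hu => (hsol u hu).2.1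
  have hDm : ∀ u ∈ Ici sstar, HasDerivAt am (gm u * (a0 u * ap u - am u)) u :=
    fun u hu => (hsol u hu).2.2
  have hc0 : ∀ u ∈ Ici sstar, ContinuousAt a0 u := fun u hu => (hD0 u hu).continuousAt
  have hcp : ∀ u ∈ Ici sstar, ContinuousAt ap u := fun u hu => (hDp u hu).continuousAt
  have hcm : ∀ u ∈ Ici sstar, ContinuousAt am u := fun u hu => (hDm u hu).continuousAt
  set Fm : ℝ → ℝ := fun u => min (min (min (a0 u - 1) (ap u - 1))
      (min (am u - 1) (ap u * am u - a0 u)))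
      (min (a0 u * am u - ap u) (a0 u * ap u - am u)) with hFm
  suffices H : ∀ t ∈ Ici sstar, 0 < Fm t by
    intro t ht
    have h := H t ht
    simp only [hFm, lt_min_iff] at h
    obtain ⟨⟨⟨h1, h2⟩, h3, h4⟩, h5, h6⟩ := h
    exact ⟨by linarith, by linarith, by linarith, by linarith, by linarith, by linarith⟩
  by_contra hcon
  push_neg at hcon
  obtain ⟨T0, hT0s, hT0⟩ := hcon
  have hFc : ContinuousOn Fm (Ici sstar) := by
    rw [hFm]
    intro u hu
    have h0 : ContinuousWithinAt a0 (Ici sstar) u := (hc0 u hu).continuousWithinAt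
    have hp : ContinuousWithinAt ap (Ici sstar) u := (hcp u hu).continuousWithinAt
    have hm : ContinuousWithinAt am (Ici sstar) u := (hcm u hu).continuousWithinAt
    have hc : ContinuousWithinAt (fun _ : ℝ => (1 : ℝ)) (Ici sstar) u := continuousWithinAt_const
    exact (((h0.sub hc).min (hp.sub hc)).min
      ((hm.sub hc).min ((hp.mul hm).sub h0))).min
      (((h0.mul hm).sub hp).min ((h0.mul hp).sub hm))
  have hclosed : IsClosed (Ici sstar ∩ Fm ⁻¹' Iic 0) :=
    hFc.preimage_isClosed_of_isClosed isClosed_Ici isClosed_Iic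
  have hne : (Ici sstar ∩ Fm ⁻¹' Iic 0).Nonempty := ⟨T0, hT0s, hT0⟩
  have hbdd : BddBelow (Ici sstar ∩ Fm ⁻¹' Iic 0) := ⟨sstar, fun x hx => hx.1⟩
  set T := sInf (Ici sstar ∩ Fm ⁻¹' Iic 0) with hTdef
  have hTbad : T ∈ Ici sstar ∩ Fm ⁻¹' Iic 0 := hclosed.csInf_mem hne hbdd
  have hTIci : sstar ≤ T := hTbad.1
  have hFT : Fm T ≤ 0 := hTbad.2
  have hFs : 0 < Fm sstar := by
    simp only [hFm, lt_min_iff]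
    refine ⟨⟨⟨by linarith, by linarith⟩, by linarith, by linarith⟩, by linarith, by linarith⟩
  have hTs : sstar < T := by
    rcases eq_or_lt_of_le hTIci with h | h
    · exfalso; rw [← h] at hFT; linarith
    · exact h
  have hIco : ∀ u ∈ Ico sstar T, 0 < Fm u := by
    intro u hu
    by_contra hle
    have hTu : T ≤ u := csInf_le hbdd ⟨hu.1, le_of_not_gt hle⟩
    exact absurd hTu (not_le.2 hu.2)
  have hIco6 : ∀ u ∈ Ico sstar T, 1 < a0 u ∧ 1 < ap u ∧ 1 < am u ∧
      0 < ap u * am u - a0 u ∧ 0 < a0 u * am u - ap u ∧ 0 < a0 u * ap u - am u := by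
    intro u hu
    have h := hIco u hu
    simp only [hFm, lt_min_iff] at h
    obtain ⟨⟨⟨h1, h2⟩, h3, h4⟩, h5, h6⟩ := h
    exact ⟨by linarith, by linarith, by linarith, h4, h5, h6⟩
  have hsub : Icc sstar T ⊆ Ici sstar := fun u hu => hu.1
  have hf1T : 0 ≤ ap T * am T - a0 T :=
    nonneg_at_right (f := fun u => ap u * am u - a0 u) (b := T) hTs (((hcp T hTbad.1).mul (hcm T hTbad.1)).sub (hc0 T hTbad.1))
      (fun u hu => (hIco6 u hu).2.2.2.1.le)
  have hf2T : 0 ≤ a0 T * am T - ap T :=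
    nonneg_at_right (f := fun u => a0 u * am u - ap u) (b := T) hTs (((hc0 T hTbad.1).mul (hcm T hTbad.1)).sub (hcp T hTbad.1))
      (fun u hu => (hIco6 u hu).2.2.2.2.1.le)
  have hf3T : 0 ≤ a0 T * ap T - am T :=
    nonneg_at_right (f := fun u => a0 u * ap u - am u) (b := T) hTs (((hc0 T hTbad.1).mul (hcp T hTbad.1)).sub (hcm T hTbad.1))
      (fun u hu => (hIco6 u hu).2.2.2.2.2.le)
  have hf1Icc : ∀ u ∈ Icc sstar T, 0 ≤ ap u * am u - a0 u := by
    intro u hu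
    rcases lt_or_eq_of_le hu.2 with h | h
    · exact (hIco6 u ⟨hu.1, h⟩).2.2.2.1.le
    · subst h; exact hf1T
  have hf2Icc : ∀ u ∈ Icc sstar T, 0 ≤ a0 u * am u - ap u := by
    intro u hu
    rcases lt_or_eq_of_le hu.2 with h | h
    · exact (hIco6 u ⟨hu.1, h⟩).2.2.2.2.1.le
    · subst h; exact hf2T
  have hf3Icc : ∀ u ∈ Icc sstar T, 0 ≤ a0 u * ap u - am u := by
    intro u hu
    rcases lt_or_eq_of_le hu.2 with h | h
    · exact (hIco6 u ⟨hu.1, h⟩).2.2.2.2.2.le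
    · subst h; exact hf3T
  have hIccIoi : Icc sstar T ⊆ Ioi (0 : ℝ) := fun u hu => lt_of_lt_of_le hs hu.1
  have hm0 : MonotoneOn a0 (Icc sstar T) :=
    monoOn_of_hasDerivAt (convex_Icc _ _) (fun u hu => hD0 u (hsub hu))
      (fun u hu => mul_nonneg (hg0 u (hIccIoi hu)).le (hf1Icc u hu))
  have hmp : MonotoneOn ap (Icc sstar T) :=
    monoOn_of_hasDerivAt (convex_Icc _ _) (fun u hu => hDp u (hsub hu))
      (fun u hu => mul_nonneg (hgp u (hIccIoi hu)).le (hf2Icc u hu))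
  have hmm : MonotoneOn am (Icc sstar T) :=
    monoOn_of_hasDerivAt (convex_Icc _ _) (fun u hu => hDm u (hsub hu))
      (fun u hu => mul_nonneg (hgm u (hIccIoi hu)).le (hf3Icc u hu))
  have ha1Icc : ∀ u ∈ Icc sstar T, 1 < a0 u ∧ 1 < ap u ∧ 1 < am u := by
    intro u hu
    have l0 := hm0 (left_mem_Icc.2 hTs.le) hu hu.1
    have lp := hmp (left_mem_Icc.2 hTs.le) hu hu.1
    have lm := hmm (left_mem_Icc.2 hTs.le) hu hu.1
    exact ⟨by linarith, by linarith, by linarith⟩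
  obtain ⟨K0, hK0⟩ := isCompact_Icc.exists_bound_of_continuousOn (hg0c.mono hIccIoi)
  obtain ⟨Kp, hKp⟩ := isCompact_Icc.exists_bound_of_continuousOn (hgpc.mono hIccIoi)
  obtain ⟨Km, hKm⟩ := isCompact_Icc.exists_bound_of_continuousOn (hgmc.mono hIccIoi)
  have hcase : ap T * am T - a0 T ≤ 0 ∨ a0 T * am T - ap T ≤ 0 ∨ a0 T * ap T - am T ≤ 0 := by
    by_contra hc
    push_neg at hc
    obtain ⟨c1, c2, c3⟩ := hc
    have haT := ha1Icc T (right_mem_Icc.2 hTs.le)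
    have hpos : 0 < Fm T := by
      simp only [hFm, lt_min_iff]
      exact ⟨⟨⟨by linarith [haT.1], by linarith [haT.2.1]⟩, by linarith [haT.2.2], c1⟩, c2, c3⟩
    linarith
  rcases hcase with hcase | hcase | hcase
  · have hgr : 0 < ap T * am T - a0 T := by
      refine gronwall_pos (f := fun u => ap u * am u - a0 u)
        (f' := fun u => gp u * (a0 u * am u - ap u) * am u +
          ap u * (gm u * (a0 u * ap u - am u)) - g0 u * (ap u * am u - a0 u))
        (K := K0) hTs.le ?_ ?_ (by linarith)
      · intro u hu
        exact ((hDp u (hsub hu)).mul (hDm u (hsub hu))).sub (hD0 u (hsub hu))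
      · intro u hu
        have h1 := hf1Icc u hu; have h2 := hf2Icc u hu; have h3 := hf3Icc u hu
        have ha := ha1Icc u hu
        have hgpu := hgp u (hIccIoi hu); have hgmu := hgm u (hIccIoi hu)
        have hKu : g0 u ≤ K0 := le_trans (le_abs_self _)
          (by simpa [Real.norm_eq_abs] using hK0 u hu)
        nlinarith [mul_nonneg (mul_nonneg hgpu.le h2) (by linarith [ha.2.2] : (0:ℝ) ≤ am u),
          mul_nonneg (by linarith [ha.2.1] : (0:ℝ) ≤ ap u) (mul_nonneg hgmu.le h3),
          mul_nonneg (sub_nonneg.2 hKu) h1]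
    linarith
  · have hgr : 0 < a0 T * am T - ap T := by
      refine gronwall_pos (f := fun u => a0 u * am u - ap u)
        (f' := fun u => g0 u * (ap u * am u - a0 u) * am u +
          a0 u * (gm u * (a0 u * ap u - am u)) - gp u * (a0 u * am u - ap u))
        (K := Kp) hTs.le ?_ ?_ (by linarith)
      · intro u hu
        exact ((hD0 u (hsub hu)).mul (hDm u (hsub hu))).sub (hDp u (hsub hu))
      · intro u hu
        have h1 := hf1Icc u hu; have h2 := hf2Icc u hu; have h3 := hf3Icc u hu
        have ha := ha1Icc u hu
        have hg0u := hg0 u (hIccIoi hu); have hgmu := hgm u (hIccIoi hu)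
        have hKu : gp u ≤ Kp := le_trans (le_abs_self _)
          (by simpa [Real.norm_eq_abs] using hKp u hu)
        nlinarith [mul_nonneg (mul_nonneg hg0u.le h1) (by linarith [ha.2.2] : (0:ℝ) ≤ am u),
          mul_nonneg (by linarith [ha.1] : (0:ℝ) ≤ a0 u) (mul_nonneg hgmu.le h3),
          mul_nonneg (sub_nonneg.2 hKu) h2]
    linarith
  · have hgr : 0 < a0 T * ap T - am T := by
      refine gronwall_pos (f := fun u => a0 u * ap u - am u)
        (f' := fun u => g0 u * (ap u * am u - a0 u) * ap u +
          a0 u * (gp u * (a0 u * am u - ap u)) - gm u * (a0 u * ap u - am u))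
        (K := Km) hTs.le ?_ ?_ (by linarith)
      · intro u hu
        exact ((hD0 u (hsub hu)).mul (hDp u (hsub hu))).sub (hDm u (hsub hu))
      · intro u hu
        have h1 := hf1Icc u hu; have h2 := hf2Icc u hu; have h3 := hf3Icc u hu
        have ha := ha1Icc u hu
        have hg0u := hg0 u (hIccIoi hu); have hgpu := hgp u (hIccIoi hu)
        have hKu : gm u ≤ Km := le_trans (le_abs_self _)
          (by simpa [Real.norm_eq_abs] using hKm u hu)
        nlinarith [mul_nonneg (mul_nonneg hg0u.le h1) (by linarith [ha.2.1] : (0:ℝ) ≤ ap u),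
          mul_nonneg (by linarith [ha.1] : (0:ℝ) ≤ a0 u) (mul_nonneg hgpu.le h2),
          mul_nonneg (sub_nonneg.2 hKu) h3]
    linarith

/-- There is no bounded solution of the reparametrized instanton ODE system on `[s*, ∞)`
whose value at `s*` lies in `S∞`: any solution of the system defined on all of `[s*, ∞)`
which lies in `S∞` at time `s*` is unbounded.  The coefficients `g0, g₊, g₋` are
continuous, strictly positive on `(0,∞)`, and converge to strictly positive limits
`C0, C₊, C₋` at infinity. -/
theorem SInfty_solutions_unbounded (g0 gp gm : ℝ → ℝ) (C0 Cp Cm : ℝ)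
    (hg0c : ContinuousOn g0 (Ioi 0)) (hgpc : ContinuousOn gp (Ioi 0))
    (hgmc : ContinuousOn gm (Ioi 0))
    (hg0 : ∀ s ∈ Ioi (0 : ℝ), 0 < g0 s) (hgp : ∀ s ∈ Ioi (0 : ℝ), 0 < gp s)
    (hgm : ∀ s ∈ Ioi (0 : ℝ), 0 < gm s)
    (hC0 : 0 < C0) (hCp : 0 < Cp) (hCm : 0 < Cm)
    (hl0 : Tendsto g0 atTop (nhds C0)) (hlp : Tendsto gp atTop (nhds Cp))
    (hlm : Tendsto gm atTop (nhds Cm))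
    (sstar : ℝ) (hs : 0 < sstar)
    (a0 ap am : ℝ → ℝ)
    (hsol : IsSolInstB2 g0 gp gm a0 ap am (Ici sstar))
    (hinit : (a0 sstar, ap sstar, am sstar) ∈ SInfty) :
    ¬ ∃ M : ℝ, ∀ s ∈ Ici sstar, |a0 s| ≤ M ∧ |ap s| ≤ M ∧ |am s| ≤ M := by
  rintro ⟨M, hM⟩
  have key := SInfty_invariant g0 gp gm hg0c hgpc hgmc hg0 hgp hgm sstar hs a0 ap am hsol hinit
  have hIciIoi : Ici sstar ⊆ Ioi (0 : ℝ) := fun u hu => lt_of_lt_of_le hs hu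
  have hD0 : ∀ u ∈ Ici sstar, HasDerivAt a0 (g0 u * (ap u * am u - a0 u)) u :=
    fun u hu => (hsol u hu).1
  have hDp : ∀ u ∈ Ici sstar, HasDerivAt ap (gp u * (a0 u * am u - ap u)) u :=
    fun u hu => (hsol u hu).2.1
  have hDm : ∀ u ∈ Ici sstar, HasDerivAt am (gm u * (a0 u * ap u - am u)) u :=
    fun u hu => (hsol u hu).2.2
  have hmono0 : MonotoneOn a0 (Ici sstar) :=
    monoOn_of_hasDerivAt (convex_Ici _) hD0
      (fun t ht => mul_nonneg (hg0 t (hIciIoi ht)).le (by linarith [(key t ht).2.2.2.1]))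
  have hmonop : MonotoneOn ap (Ici sstar) :=
    monoOn_of_hasDerivAt (convex_Ici _) hDp
      (fun t ht => mul_nonneg (hgp t (hIciIoi ht)).le (by linarith [(key t ht).2.2.2.2.1]))
  have hmonom : MonotoneOn am (Ici sstar) :=
    monoOn_of_hasDerivAt (convex_Ici _) hDm
      (fun t ht => mul_nonneg (hgm t (hIciIoi ht)).le (by linarith [(key t ht).2.2.2.2.2]))
  obtain ⟨L0, hL0t, hL0ge⟩ := exists_lim hmono0 (fun t ht => (abs_le.1 (hM t ht).1).2)
  obtain ⟨Lp, hLpt, hLpge⟩ := exists_lim hmonop (fun t ht => (abs_le.1 (hM t ht).2.1).2)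
  obtain ⟨Lm, hLmt, hLmge⟩ := exists_lim hmonom (fun t ht => (abs_le.1 (hM t ht).2.2).2)
  have hks := key sstar (mem_Ici.2 le_rfl)
  have hL0gt : 1 < L0 := lt_of_lt_of_le hks.1 hL0ge
  have hLpgt : 1 < Lp := lt_of_lt_of_le hks.2.1 hLpge
  have hLmgt : 1 < Lm := lt_of_lt_of_le hks.2.2.1 hLmge
  have hf1lim : Tendsto (fun t => ap t * am t - a0 t) atTop (nhds (Lp * Lm - L0)) :=
    (hLpt.mul hLmt).sub hL0t
  have hf2lim : Tendsto (fun t => a0 t * am t - ap t) atTop (nhds (L0 * Lm - Lp)) :=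
    (hL0t.mul hLmt).sub hLpt
  have e1ge : 0 ≤ Lp * Lm - L0 := ge_of_tendsto hf1lim (by
    filter_upwards [eventually_ge_atTop sstar] with t ht
    linarith [(key t (mem_Ici.2 ht)).2.2.2.1])
  have e2ge : 0 ≤ L0 * Lm - Lp := ge_of_tendsto hf2lim (by
    filter_upwards [eventually_ge_atTop sstar] with t ht
    linarith [(key t (mem_Ici.2 ht)).2.2.2.2.1])
  have e1le : Lp * Lm - L0 ≤ 0 := by
    by_contra h
    push_neg at h
    have hδ : 0 < C0 * (Lp * Lm - L0) := mul_pos hC0 h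
    have hten : Tendsto (fun t => g0 t * (ap t * am t - a0 t)) atTop
        (nhds (C0 * (Lp * Lm - L0))) := hl0.mul hf1lim
    have hev : ∀ᶠ t in atTop, C0 * (Lp * Lm - L0) / 2 < g0 t * (ap t * am t - a0 t) :=
      hten.eventually (eventually_gt_nhds (half_lt_self hδ))
    obtain ⟨t1, H⟩ := eventually_atTop.1 (hev.and (eventually_ge_atTop sstar))
    exact no_linear_growth (half_pos hδ)
      (fun t ht => hD0 t (mem_Ici.2 (H t ht).2))
      (fun t ht => (H t ht).1.le)
      (fun t ht => (abs_le.1 (hM t (mem_Ici.2 (H t ht).2)).1).2)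
  have e2le : L0 * Lm - Lp ≤ 0 := by
    by_contra h
    push_neg at h
    have hδ : 0 < Cp * (L0 * Lm - Lp) := mul_pos hCp h
    have hten : Tendsto (fun t => gp t * (a0 t * am t - ap t)) atTop
        (nhds (Cp * (L0 * Lm - Lp))) := hlp.mul hf2lim
    have hev : ∀ᶠ t in atTop, Cp * (L0 * Lm - Lp) / 2 < gp t * (a0 t * am t - ap t) :=
      hten.eventually (eventually_gt_nhds (half_lt_self hδ))
    obtain ⟨t1, H⟩ := eventually_atTop.1 (hev.and (eventually_ge_atTop sstar))
    exact no_linear_growth (half_pos hδ)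
      (fun t ht => hDp t (mem_Ici.2 (H t ht).2))
      (fun t ht => (H t ht).1.le)
      (fun t ht => (abs_le.1 (hM t (mem_Ici.2 (H t ht).2)).2.1).2)
  have E1 : L0 = Lp * Lm := by linarith
  have E2 : Lp = L0 * Lm := by linarith
  have hsq : Lp = Lp * (Lm * Lm) := by
    calc Lp = L0 * Lm := E2
      _ = Lp * Lm * Lm := by rw [E1]
      _ = Lp * (Lm * Lm) := by ring
  nlinarith [mul_pos (by linarith : (0:ℝ) < Lp) (by nlinarith : (0:ℝ) < Lm * Lm - 1)]
end
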